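/- arXiv:2602.17090 — 7 statements merged into one kernel-verified Lean document; each statement's English description precedes it below -/
import Mathlib

section
/- Under the stated assumptions, if moreover ∫₀^T∫_{−∞}^{−1}(log(1−θ_{t,x}))² π(t,x) dx dt<∞ (condition (A5)), then ∫₀^T∫_ℝ (log(1−θ_{t,x}))² π(t,x) dx dt<∞. -/
open MeasureTheory Set

/-- The drift coefficient `μ^S_t = γ'_t + ∫ (e^x - 1 - x 1_{|x|≤1}) π(t,x) dx`. -/
noncomputable def muS (π : ℝ → ℝ → ℝ) (γ' : ℝ → ℝ) (t : ℝ) : ℝ :=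
  γ' t + ∫ x : ℝ, (Real.exp x - 1 - (if |x| ≤ 1 then x else 0)) * π t x

/-- `Σ_t = ∫ (e^x - 1)² π(t,x) dx`. -/
noncomputable def Sig (π : ℝ → ℝ → ℝ) (t : ℝ) : ℝ :=
  ∫ x : ℝ, (Real.exp x - 1) ^ 2 * π t x

/-- `θ_{t,x} = μ^S_t (e^x - 1) / Σ_t`. -/
noncomputable def theta (π : ℝ → ℝ → ℝ) (γ' : ℝ → ℝ) (t x : ℝ) : ℝ :=
  muS π γ' t * (Real.exp x - 1) / Sig π t

private lemma log_one_add_sq_le (c x : ℝ) (hc0 : 0 ≤ c) (hc1 : c ≤ 1) :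
    (Real.log (1 + c * (Real.exp x - 1))) ^ 2 ≤ x ^ 2 := by
  have hex := Real.exp_pos x
  have hpos : 0 < 1 + c * (Real.exp x - 1) := by
    rcases le_or_gt 1 (Real.exp x) with h | h
    · nlinarith
    · nlinarith
  have hub : Real.log (1 + c * (Real.exp x - 1)) ≤ |x| := by
    rw [Real.log_le_iff_le_exp hpos]
    have h1 : Real.exp x ≤ Real.exp |x| := Real.exp_le_exp.mpr (le_abs_self x)
    have h2 : (1:ℝ) ≤ Real.exp |x| := Real.one_le_exp (abs_nonneg x)
    rcases le_or_gt 1 (Real.exp x) with h | h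
    · nlinarith
    · nlinarith
  have hlb : -|x| ≤ Real.log (1 + c * (Real.exp x - 1)) := by
    rw [Real.le_log_iff_exp_le hpos]
    rcases le_or_gt 0 x with h | h
    · have h1 : Real.exp (-|x|) ≤ 1 := by
        rw [← Real.exp_zero]
        exact Real.exp_le_exp.mpr (neg_nonpos.mpr (abs_nonneg x))
      have h3 : (1:ℝ) ≤ Real.exp x := Real.one_le_exp h
      nlinarith [mul_nonneg hc0 (by linarith : (0:ℝ) ≤ Real.exp x - 1)]
    · have h2 : -|x| = x := by rw [abs_of_neg h]; ring
      rw [h2]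
      have h3 : Real.exp x ≤ 1 := by
        rw [← Real.exp_zero]
        exact Real.exp_le_exp.mpr h.le
      nlinarith [mul_nonneg (by linarith : (0:ℝ) ≤ 1 - c)
        (by linarith : (0:ℝ) ≤ 1 - Real.exp x)]
  calc (Real.log (1 + c * (Real.exp x - 1))) ^ 2 ≤ |x| ^ 2 := sq_le_sq' hlb hub
    _ = x ^ 2 := sq_abs x

private lemma theta_log_sq_le (π : ℝ → ℝ → ℝ) (γ' : ℝ → ℝ) (t x : ℝ)
    (hS : 0 < Sig π t) (h1 : muS π γ' t ≤ 0) (h2 : -Sig π t < muS π γ' t) :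
    (Real.log (1 - theta π γ' t x)) ^ 2 ≤ x ^ 2 := by
  have hrw : 1 - theta π γ' t x = 1 + (-(muS π γ' t) / Sig π t) * (Real.exp x - 1) := by
    unfold theta; ring
  rw [hrw]
  exact log_one_add_sq_le _ x (div_nonneg (neg_nonneg.mpr h1) hS.le)
    ((div_le_one hS).mpr (by linarith))

private lemma sq_le_exp_four_mul (x : ℝ) (hx : 1 < x) : x ^ 2 ≤ Real.exp (4 * x) := by
  have he : x + 1 ≤ Real.exp x := Real.add_one_le_exp x
  have h4 : Real.exp (4 * x) = Real.exp x ^ 4 := by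
    have := Real.exp_nat_mul x 4
    norm_num at this
    linarith [this]
  rw [h4]
  nlinarith [Real.exp_pos x, sq_nonneg (Real.exp x), sq_nonneg (Real.exp x - 1),
    sq_nonneg (Real.exp x ^ 2 - Real.exp x)]

theorem lemma33_log_sq_integrable
    (T : ℝ) (hT : 0 < T) (π : ℝ → ℝ → ℝ)
    (hπmeas : Measurable (Function.uncurry π)) (hπnn : ∀ t x, 0 ≤ π t x)
    (h1 : ∫⁻ t in Set.Ioc 0 T, ∫⁻ x, ENNReal.ofReal (min 1 (x ^ 2) * π t x) < ⊤)
    (hA3 : ∫⁻ t in Set.Ioc 0 T, ∫⁻ x in {x : ℝ | 1 < |x|},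
      ENNReal.ofReal (Real.exp (4 * x) * π t x) < ⊤)
    (γ' : ℝ → ℝ) (hγ' : IntegrableOn γ' (Set.Ioc 0 T))
    (hμint : ∀ t ∈ Set.Ioc 0 T,
      Integrable (fun x : ℝ => (Real.exp x - 1 - (if |x| ≤ 1 then x else 0)) * π t x))
    (hSigInt : ∀ t ∈ Set.Ioc 0 T, Integrable (fun x : ℝ => (Real.exp x - 1) ^ 2 * π t x))
    (hSigPos : ∀ t ∈ Set.Ioc 0 T, 0 < Sig π t)
    (hA4 : ∀ t ∈ Set.Ioc 0 T, muS π γ' t ≤ 0 ∧ -Sig π t < muS π γ' t)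
    (hA5 : ∫⁻ t in Set.Ioc 0 T, ∫⁻ x in Set.Iic (-1 : ℝ),
      ENNReal.ofReal ((Real.log (1 - theta π γ' t x)) ^ 2 * π t x) < ⊤) :
    ∫⁻ t in Set.Ioc 0 T, ∫⁻ x,
      ENNReal.ofReal ((Real.log (1 - theta π γ' t x)) ^ 2 * π t x) < ⊤ := by
  classical
  set f : ℝ → ℝ → ENNReal := fun t x =>
    ENNReal.ofReal ((Real.log (1 - theta π γ' t x)) ^ 2 * π t x) with hf
  set F : ℝ → ENNReal := fun t => ∫⁻ x in Set.Iic (-1:ℝ), f t x with hFdef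
  set G : ℝ → ENNReal := fun t => ∫⁻ x, ENNReal.ofReal (min 1 (x ^ 2) * π t x) with hGdef
  set H : ℝ → ENNReal := fun t =>
    ∫⁻ x in {x : ℝ | 1 < |x|}, ENNReal.ofReal (Real.exp (4 * x) * π t x) with hHdef
  have hπt : ∀ t, Measurable (π t) := fun t => hπmeas.of_uncurry_left
  have hSabs : MeasurableSet {x : ℝ | 1 < |x|} :=
    measurableSet_lt measurable_const measurable_abs
  -- pointwise (ae in t) bound
  have key : ∀ᵐ t ∂((volume : Measure ℝ).restrict (Set.Ioc 0 T)),
      (∫⁻ x, f t x) ≤ F t + (G t + H t) := by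
    filter_upwards [ae_restrict_mem measurableSet_Ioc] with t ht
    have hS := hSigPos t ht
    obtain ⟨hm1, hm2⟩ := hA4 t ht
    have hsplit : (∫⁻ x, f t x) = F t + ∫⁻ x in Set.Ioi (-1:ℝ), f t x := by
      rw [hFdef]
      rw [← lintegral_add_compl (f t) (measurableSet_Iic (a := (-1:ℝ))), compl_Iic]
    rw [hsplit]
    refine add_le_add le_rfl ?_
    set b : ℝ → ENNReal := fun x => ENNReal.ofReal (min 1 (x ^ 2) * π t x)
        + Set.indicator {x : ℝ | 1 < |x|}
            (fun x => ENNReal.ofReal (Real.exp (4 * x) * π t x)) x with hbdef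
    have hb : ∀ᵐ x ∂((volume : Measure ℝ).restrict (Set.Ioi (-1:ℝ))), f t x ≤ b x := by
      filter_upwards [ae_restrict_mem measurableSet_Ioi] with x hx
      have hx2 : f t x ≤ ENNReal.ofReal (x ^ 2 * π t x) :=
        ENNReal.ofReal_le_ofReal
          (mul_le_mul_of_nonneg_right (theta_log_sq_le π γ' t x hS hm1 hm2) (hπnn t x))
      rcases le_or_gt (|x|) 1 with hx1 | hx1
      · have hmin : min 1 (x ^ 2) = x ^ 2 := by
          refine min_eq_right ?_
          nlinarith [sq_abs x, abs_nonneg x]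
        calc f t x ≤ ENNReal.ofReal (x ^ 2 * π t x) := hx2
          _ = ENNReal.ofReal (min 1 (x ^ 2) * π t x) := by rw [hmin]
          _ ≤ b x := le_self_add
      · have hxgt : 1 < x := by
          rcases lt_abs.mp hx1 with h | h
          · exact h
          · exact absurd (Set.mem_Ioi.mp hx) (by linarith)
        have hmem : x ∈ {x : ℝ | 1 < |x|} := hx1
        calc f t x ≤ ENNReal.ofReal (x ^ 2 * π t x) := hx2
          _ ≤ ENNReal.ofReal (Real.exp (4 * x) * π t x) :=
            ENNReal.ofReal_le_ofReal
              (mul_le_mul_of_nonneg_right (sq_le_exp_four_mul x hxgt) (hπnn t x))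
          _ = Set.indicator {x : ℝ | 1 < |x|}
              (fun x => ENNReal.ofReal (Real.exp (4 * x) * π t x)) x := by
            rw [Set.indicator_of_mem hmem]
          _ ≤ b x := le_add_self
    calc (∫⁻ x in Set.Ioi (-1:ℝ), f t x) ≤ ∫⁻ x in Set.Ioi (-1:ℝ), b x :=
          lintegral_mono_ae hb
      _ ≤ ∫⁻ x, b x := setLIntegral_le_lintegral _ _
      _ = G t + H t := by
          rw [hbdef]
          rw [lintegral_add_left]
          · rw [lintegral_indicator hSabs _]
          · exact ENNReal.measurable_ofReal.comp
              ((measurable_const.min (measurable_id.pow_const 2)).mul (hπt t))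
  -- measurability of G
  have hGmeas : Measurable G := by
    refine Measurable.lintegral_prod_right ?_
    exact ENNReal.measurable_ofReal.comp
      ((measurable_const.min (measurable_snd.pow_const 2)).mul hπmeas)
  -- measurability of H
  have hHmeas : Measurable H := by
    have : H = fun t => ∫⁻ x, Set.indicator {x : ℝ | 1 < |x|}
        (fun x => ENNReal.ofReal (Real.exp (4 * x) * π t x)) x := by
      funext t
      rw [lintegral_indicator hSabs _]
    rw [this]
    refine Measurable.lintegral_prod_right ?_
    have hmem : MeasurableSet {p : ℝ × ℝ | 1 < |p.2|} :=
      measurableSet_lt measurable_const measurable_snd.abs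
    have : (Function.uncurry fun t x => Set.indicator {x : ℝ | 1 < |x|}
        (fun x => ENNReal.ofReal (Real.exp (4 * x) * π t x)) x)
        = fun p : ℝ × ℝ => if 1 < |p.2| then
            ENNReal.ofReal (Real.exp (4 * p.2) * π p.1 p.2) else 0 := by
      funext p
      simp [Function.uncurry, Set.indicator]
    rw [this]
    exact Measurable.ite hmem
      (ENNReal.measurable_ofReal.comp
        ((Real.measurable_exp.comp (measurable_snd.const_mul 4)).mul hπmeas))
      measurable_const
  -- AE-measurability of F
  have hγae : AEMeasurable γ' ((volume : Measure ℝ).restrict (Set.Ioc 0 T)) :=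
    hγ'.aestronglyMeasurable.aemeasurable
  set g := hγae.mk γ' with hgdef
  have hg_meas : Measurable g := hγae.measurable_mk
  have hg_ae : γ' =ᵐ[(volume : Measure ℝ).restrict (Set.Ioc 0 T)] g := hγae.ae_eq_mk
  set I : ℝ → ℝ := fun t => ∫ x, (Real.exp x - 1 - (if |x| ≤ 1 then x else 0)) * π t x with hIdef
  have hImeas : Measurable I := by
    have hsm : StronglyMeasurable fun p : ℝ × ℝ =>
        (Real.exp p.2 - 1 - (if |p.2| ≤ 1 then p.2 else 0)) * π p.1 p.2 := by
      refine Measurable.stronglyMeasurable ?_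
      refine Measurable.mul ?_ hπmeas
      refine Measurable.sub ((Real.measurable_exp.comp measurable_snd).sub measurable_const) ?_
      exact Measurable.ite (measurableSet_le measurable_snd.abs measurable_const)
        measurable_snd measurable_const
    exact hsm.integral_prod_right'.measurable
  have hSmeas : Measurable (Sig π) := by
    have hsm : StronglyMeasurable fun p : ℝ × ℝ => (Real.exp p.2 - 1) ^ 2 * π p.1 p.2 := by
      refine Measurable.stronglyMeasurable ?_
      exact (((Real.measurable_exp.comp measurable_snd).sub measurable_const).pow_const 2).mul
        hπmeas
    exact hsm.integral_prod_right'.measurable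
  set F' : ℝ → ENNReal := fun t => ∫⁻ x, Set.indicator (Set.Iic (-1:ℝ))
      (fun x => ENNReal.ofReal
        ((Real.log (1 - (g t + I t) * (Real.exp x - 1) / Sig π t)) ^ 2 * π t x)) x with hF'def
  have hF'meas : Measurable F' := by
    refine Measurable.lintegral_prod_right ?_
    have hmem : MeasurableSet {p : ℝ × ℝ | p.2 ≤ -1} :=
      measurableSet_le measurable_snd measurable_const
    have heq : (Function.uncurry fun t x => Set.indicator (Set.Iic (-1:ℝ))
        (fun x => ENNReal.ofReal
          ((Real.log (1 - (g t + I t) * (Real.exp x - 1) / Sig π t)) ^ 2 * π t x)) x)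
        = fun p : ℝ × ℝ => if p.2 ≤ -1 then ENNReal.ofReal
            ((Real.log (1 - (g p.1 + I p.1) * (Real.exp p.2 - 1) / Sig π p.1)) ^ 2
              * π p.1 p.2) else 0 := by
      funext p
      simp [Function.uncurry, Set.indicator, Set.mem_Iic]
    rw [heq]
    refine Measurable.ite hmem ?_ measurable_const
    refine ENNReal.measurable_ofReal.comp (Measurable.mul ?_ hπmeas)
    refine Measurable.pow_const ?_ 2
    refine Real.measurable_log.comp ?_
    refine measurable_const.sub ?_
    exact (((hg_meas.comp measurable_fst).add (hImeas.comp measurable_fst)).mul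
      ((Real.measurable_exp.comp measurable_snd).sub measurable_const)).div
      (hSmeas.comp measurable_fst)
  have hFF' : F =ᵐ[(volume : Measure ℝ).restrict (Set.Ioc 0 T)] F' := by
    filter_upwards [hg_ae] with t ht
    rw [hFdef, hF'def]
    simp only
    rw [← lintegral_indicator (measurableSet_Iic (a := (-1:ℝ))) _]
    congr 1
    funext x
    by_cases hx : x ∈ Set.Iic (-1:ℝ)
    · rw [Set.indicator_of_mem hx, Set.indicator_of_mem hx, hf]
      simp only
      congr 3
      simp [theta, muS, ht, hIdef]
    · rw [Set.indicator_of_notMem hx, Set.indicator_of_notMem hx]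
  have hFmeas : AEMeasurable F ((volume : Measure ℝ).restrict (Set.Ioc 0 T)) :=
    hF'meas.aemeasurable.congr hFF'.symm
  calc (∫⁻ t in Set.Ioc 0 T, ∫⁻ x, f t x)
      ≤ ∫⁻ t in Set.Ioc 0 T, (F t + (G t + H t)) := lintegral_mono_ae key
    _ = (∫⁻ t in Set.Ioc 0 T, F t) + ∫⁻ t in Set.Ioc 0 T, (G t + H t) :=
        lintegral_add_left' hFmeas _
    _ = (∫⁻ t in Set.Ioc 0 T, F t) + ((∫⁻ t in Set.Ioc 0 T, G t)
        + ∫⁻ t in Set.Ioc 0 T, H t) := by rw [lintegral_add_left hGmeas]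
    _ < ⊤ := by
        refine ENNReal.add_lt_top.mpr ⟨hA5, ENNReal.add_lt_top.mpr ⟨h1, hA3⟩⟩
end

section
/- Under the stated assumptions, if moreover ∫₀^T∫_{−∞}^{−1}(log(1−θ_{t,x}))² π(t,x) dx dt<∞ (condition (A5)) and ∫₀^T∫_{0<|x|≤1}|x| π(t,x) dx dt<∞ (condition (A6)), then ∫₀^T∫_ℝ (|θ_{t,x}|+|log(1−θ_{t,x})|) π(t,x) dx dt<∞. -/
open MeasureTheory Set

/-- elementary: `|a| ≤ 1 + a²`. -/
lemma aux_abs_le_one_add_sq (a : ℝ) : |a| ≤ 1 + a ^ 2 := by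
  rcases le_or_gt (|a|) 1 with h | h
  · nlinarith [sq_nonneg a]
  · nlinarith [sq_abs a, abs_nonneg a]

/-- elementary: `|e^x - 1| ≤ 3 |x|` for `|x| ≤ 1`. -/
lemma aux_abs_exp_sub_one (x : ℝ) (hx : |x| ≤ 1) : |Real.exp x - 1| ≤ 3 * |x| := by
  rcases le_or_gt 0 x with hx0 | hx0
  · rw [abs_of_nonneg hx0] at hx ⊢
    rw [abs_of_nonneg (by nlinarith [Real.exp_pos x, Real.add_one_le_exp x] : (0:ℝ) ≤ Real.exp x - 1)]
    have h1 : -x + 1 ≤ Real.exp (-x) := Real.add_one_le_exp (-x)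
    have h2 : Real.exp (-x) * Real.exp x = 1 := by rw [← Real.exp_add]; simp
    have h3 : Real.exp x ≤ Real.exp 1 := Real.exp_le_exp.2 hx
    have h4 : Real.exp 1 ≤ 3 := by
      have := Real.exp_one_lt_d9; linarith
    nlinarith [Real.exp_pos x, Real.exp_pos (-x)]
  · rw [abs_of_neg hx0] at hx ⊢
    have h1 : x + 1 ≤ Real.exp x := Real.add_one_le_exp x
    have h2 : Real.exp x < 1 := by
      rw [← Real.exp_zero]; exact Real.exp_lt_exp.2 hx0
    rw [abs_of_nonpos (by linarith)]
    linarith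

theorem lemma34_theta_log_integrable
    (T : ℝ) (hT : 0 < T) (π : ℝ → ℝ → ℝ)
    (hπmeas : Measurable (Function.uncurry π)) (hπnn : ∀ t x, 0 ≤ π t x)
    (h1 : ∫⁻ t in Set.Ioc 0 T, ∫⁻ x, ENNReal.ofReal (min 1 (x ^ 2) * π t x) < ⊤)
    (hA3 : ∫⁻ t in Set.Ioc 0 T, ∫⁻ x in {x : ℝ | 1 < |x|},
      ENNReal.ofReal (Real.exp (4 * x) * π t x) < ⊤)
    (γ' : ℝ → ℝ) (hγ' : IntegrableOn γ' (Set.Ioc 0 T))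
    (hμint : ∀ t ∈ Set.Ioc 0 T,
      Integrable (fun x : ℝ => (Real.exp x - 1 - (if |x| ≤ 1 then x else 0)) * π t x))
    (hSigInt : ∀ t ∈ Set.Ioc 0 T, Integrable (fun x : ℝ => (Real.exp x - 1) ^ 2 * π t x))
    (hSigPos : ∀ t ∈ Set.Ioc 0 T, 0 < Sig π t)
    (hA4 : ∀ t ∈ Set.Ioc 0 T, muS π γ' t ≤ 0 ∧ -Sig π t < muS π γ' t)
    (hA5 : ∫⁻ t in Set.Ioc 0 T, ∫⁻ x in Set.Iic (-1 : ℝ),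
      ENNReal.ofReal ((Real.log (1 - theta π γ' t x)) ^ 2 * π t x) < ⊤)
    (hA6 : ∫⁻ t in Set.Ioc 0 T, ∫⁻ x in {x : ℝ | 0 < |x| ∧ |x| ≤ 1},
      ENNReal.ofReal (|x| * π t x) < ⊤) :
    ∫⁻ t in Set.Ioc 0 T, ∫⁻ x,
      ENNReal.ofReal ((|theta π γ' t x| + |Real.log (1 - theta π γ' t x)|) * π t x) < ⊤ := by
  classical
  set S2 : Set ℝ := {x : ℝ | 0 < |x| ∧ |x| ≤ 1} with hS2def
  have hS2m : MeasurableSet S2 := by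
    have : S2 = {x : ℝ | 0 < |x|} ∩ {x : ℝ | |x| ≤ 1} := rfl
    rw [this]
    exact (measurableSet_lt measurable_const measurable_abs).inter
      (measurableSet_le measurable_abs measurable_const)
  have hS3m : MeasurableSet {x : ℝ | 1 < x} := measurableSet_lt measurable_const measurable_id
  have hπt : ∀ t, Measurable (fun x => π t x) := fun t =>
    hπmeas.comp measurable_prodMk_left
  -- bounding functions
  set g1 : ℝ → ℝ → ENNReal := fun t x => (Set.Iic (-1:ℝ)).indicator
      (fun y => ENNReal.ofReal ((2 + (Real.log (1 - theta π γ' t y)) ^ 2) * π t y)) x with hg1def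
  set g2 : ℝ → ℝ → ENNReal := fun t x => S2.indicator
      (fun y => ENNReal.ofReal (12 * (|y| * π t y))) x with hg2def
  set g3 : ℝ → ℝ → ENNReal := fun t x => ({x : ℝ | 1 < x}).indicator
      (fun y => ENNReal.ofReal (2 * (Real.exp (4 * y) * π t y))) x with hg3def
  -- pointwise bound
  have key : ∀ t ∈ Set.Ioc 0 T, ∀ x : ℝ,
      ENNReal.ofReal ((|theta π γ' t x| + |Real.log (1 - theta π γ' t x)|) * π t x)
        ≤ g1 t x + g2 t x + g3 t x := by
    intro t ht x
    obtain ⟨hμ0, hm2⟩ := hA4 t ht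
    have hSg := hSigPos t ht
    have hma : |muS π γ' t| ≤ Sig π t := by rw [abs_of_nonpos hμ0]; linarith
    have habs : |theta π γ' t x| ≤ |Real.exp x - 1| := by
      rw [theta, abs_div, abs_mul, abs_of_pos hSg, div_le_iff₀ hSg]
      nlinarith [abs_nonneg (Real.exp x - 1), abs_nonneg (muS π γ' t)]
    have hsign_pos : 0 ≤ x → theta π γ' t x ≤ 0 := by
      intro hx
      have he : 0 ≤ Real.exp x - 1 := by
        have := Real.one_le_exp hx; linarith
      exact div_nonpos_of_nonpos_of_nonneg (mul_nonpos_of_nonpos_of_nonneg hμ0 he) hSg.le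
    have hsign_neg : x ≤ 0 → 0 ≤ theta π γ' t x := by
      intro hx
      have he : Real.exp x - 1 ≤ 0 := by
        have : Real.exp x ≤ 1 := Real.exp_le_one_iff.mpr hx
        linarith
      exact div_nonneg (by nlinarith) hSg.le
    have hlog_of_nonpos : theta π γ' t x ≤ 0 →
        |Real.log (1 - theta π γ' t x)| ≤ |theta π γ' t x| := by
      intro hθ
      have h1θ : (1:ℝ) ≤ 1 - theta π γ' t x := by linarith
      rw [abs_of_nonneg (Real.log_nonneg h1θ), abs_of_nonpos hθ]
      have := Real.log_le_sub_one_of_pos (by linarith : (0:ℝ) < 1 - theta π γ' t x)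
      linarith
    by_cases hx1 : x ≤ -1
    · -- far left tail: use g1
      have hstep : ENNReal.ofReal ((|theta π γ' t x| + |Real.log (1 - theta π γ' t x)|) * π t x)
          ≤ g1 t x := by
        rw [hg1def]
        simp only [Set.indicator_of_mem (Set.mem_Iic.mpr hx1)]
        apply ENNReal.ofReal_le_ofReal
        apply mul_le_mul_of_nonneg_right _ (hπnn t x)
        have hθ1 : |theta π γ' t x| ≤ 1 := by
          refine habs.trans ?_
          have := Real.exp_pos x
          have : Real.exp x ≤ 1 := Real.exp_le_one_iff.mpr (by linarith)
          rw [abs_of_nonpos (by linarith)]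
          have := Real.exp_pos x
          linarith
        have := aux_abs_le_one_add_sq (Real.log (1 - theta π γ' t x))
        linarith
      exact hstep.trans (le_add_right (le_add_right le_rfl))
    · push_neg at hx1
      by_cases hx0 : x = 0
      · subst hx0
        have : theta π γ' 0 0 = 0 := by simp [theta, Real.exp_zero]
        simp only [theta] at *
        simp [Real.exp_zero]
      by_cases hxu : x ≤ 1
      · -- middle region: use g2
        have hxS2 : x ∈ S2 := ⟨abs_pos.mpr hx0, abs_le.mpr ⟨hx1.le, hxu⟩⟩
        have hxa : |x| ≤ 1 := abs_le.mpr ⟨hx1.le, hxu⟩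
        have hexp := aux_abs_exp_sub_one x hxa
        have hθ3 : |theta π γ' t x| ≤ 3 * |x| := habs.trans hexp
        have hlog : |Real.log (1 - theta π γ' t x)| ≤ 9 * |x| := by
          rcases le_or_gt 0 x with hx | hx
          · exact (hlog_of_nonpos (hsign_pos hx)).trans (by nlinarith [abs_nonneg x])
          · -- x < 0 : 0 ≤ θ ≤ 1 - e^x, so e^x ≤ 1 - θ ≤ 1, hence x ≤ log(1-θ) ≤ 0
            have hθ0 : 0 ≤ theta π γ' t x := hsign_neg hx.le
            have hexp1 : Real.exp x < 1 := by
              rw [← Real.exp_zero]; exact Real.exp_lt_exp.2 hx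
            have habs' : theta π γ' t x ≤ 1 - Real.exp x := by
              have : |Real.exp x - 1| = 1 - Real.exp x := by
                rw [abs_of_nonpos (by linarith)]; ring
              rw [this] at habs
              calc theta π γ' t x ≤ |theta π γ' t x| := le_abs_self _
                _ ≤ 1 - Real.exp x := habs
            have h1θ : Real.exp x ≤ 1 - theta π γ' t x := by linarith
            have hlow : x ≤ Real.log (1 - theta π γ' t x) := by
              calc x = Real.log (Real.exp x) := (Real.log_exp x).symm
                _ ≤ Real.log (1 - theta π γ' t x) :=
                  Real.log_le_log (Real.exp_pos x) h1θ
            have hup : Real.log (1 - theta π γ' t x) ≤ 0 :=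
              Real.log_nonpos (by nlinarith [Real.exp_pos x]) (by linarith)
            rw [abs_of_nonpos hup, abs_of_neg hx]
            linarith
        have hstep : ENNReal.ofReal ((|theta π γ' t x| + |Real.log (1 - theta π γ' t x)|) * π t x)
            ≤ g2 t x := by
          rw [hg2def]
          simp only [Set.indicator_of_mem hxS2]
          apply ENNReal.ofReal_le_ofReal
          have := hπnn t x
          nlinarith
        calc ENNReal.ofReal ((|theta π γ' t x| + |Real.log (1 - theta π γ' t x)|) * π t x)
            ≤ g2 t x := hstep
          _ ≤ g1 t x + g2 t x := le_add_self
          _ ≤ g1 t x + g2 t x + g3 t x := le_add_right le_rfl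
      · -- right tail: use g3
        push_neg at hxu
        have hθ0 : theta π γ' t x ≤ 0 := hsign_pos (by linarith)
        have hbθ : |theta π γ' t x| ≤ Real.exp (4 * x) := by
          refine habs.trans ?_
          have h1 : (1:ℝ) ≤ Real.exp x := Real.one_le_exp (by linarith)
          rw [abs_of_nonneg (by linarith)]
          have : Real.exp x ≤ Real.exp (4 * x) := Real.exp_le_exp.2 (by linarith)
          linarith
        have hstep : ENNReal.ofReal ((|theta π γ' t x| + |Real.log (1 - theta π γ' t x)|) * π t x)
            ≤ g3 t x := by
          rw [hg3def]
          simp only [Set.indicator_of_mem (show x ∈ {x : ℝ | 1 < x} from hxu)]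
          apply ENNReal.ofReal_le_ofReal
          have := hπnn t x
          have := hlog_of_nonpos hθ0
          nlinarith
        exact hstep.trans le_add_self
  -- x-measurability of the bounding functions for each fixed t
  have hg1meas : ∀ t, Measurable (g1 t) := by
    intro t
    apply Measurable.indicator _ measurableSet_Iic
    apply Measurable.ennreal_ofReal
    apply Measurable.mul _ (hπt t)
    apply Measurable.add measurable_const
    apply Measurable.pow _ measurable_const
    apply Real.measurable_log.comp
    apply Measurable.sub measurable_const
    unfold theta
    exact ((measurable_const.mul ((Real.measurable_exp).sub measurable_const)).div
      measurable_const)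
  have hg2meas : ∀ t, Measurable (g2 t) := by
    intro t
    apply Measurable.indicator _ hS2m
    exact (Measurable.mul measurable_const (measurable_abs.mul (hπt t))).ennreal_ofReal
  have hg3meas : ∀ t, Measurable (g3 t) := by
    intro t
    apply Measurable.indicator _ hS3m
    exact (measurable_const.mul
      ((Real.measurable_exp.comp (measurable_const.mul measurable_id)).mul (hπt t))).ennreal_ofReal
  -- t-measurability of the lintegrals of g2, g3
  have hπmeas' : Measurable fun p : ℝ × ℝ => π p.1 p.2 := hπmeas
  have hg2prod : Measurable fun p : ℝ × ℝ => g2 p.1 p.2 := by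
    have : (fun p : ℝ × ℝ => g2 p.1 p.2)
        = fun p => if p.2 ∈ S2 then ENNReal.ofReal (12 * (|p.2| * π p.1 p.2)) else 0 := by
      funext p; rw [hg2def]; simp [Set.indicator_apply]
    rw [this]
    exact Measurable.ite (hS2m.preimage measurable_snd)
      ((measurable_const.mul ((measurable_abs.comp measurable_snd).mul hπmeas')).ennreal_ofReal)
      measurable_const
  have hg3prod : Measurable fun p : ℝ × ℝ => g3 p.1 p.2 := by
    have : (fun p : ℝ × ℝ => g3 p.1 p.2)
        = fun p => if p.2 ∈ {x : ℝ | 1 < x} then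
            ENNReal.ofReal (2 * (Real.exp (4 * p.2) * π p.1 p.2)) else 0 := by
      funext p; rw [hg3def]; simp [Set.indicator_apply]
    rw [this]
    exact Measurable.ite (hS3m.preimage measurable_snd)
      ((measurable_const.mul
        ((Real.measurable_exp.comp (measurable_const.mul measurable_snd)).mul
          hπmeas')).ennreal_ofReal)
      measurable_const
  have hB : Measurable fun t => ∫⁻ x, g2 t x := hg2prod.lintegral_prod_right'
  have hC : Measurable fun t => ∫⁻ x, g3 t x := hg3prod.lintegral_prod_right'
  -- main chain
  have step1 : ∫⁻ t in Set.Ioc 0 T, ∫⁻ x,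
      ENNReal.ofReal ((|theta π γ' t x| + |Real.log (1 - theta π γ' t x)|) * π t x)
      ≤ ∫⁻ t in Set.Ioc 0 T, ((∫⁻ x, g1 t x) + ((∫⁻ x, g2 t x) + (∫⁻ x, g3 t x))) := by
    apply setLIntegral_mono' measurableSet_Ioc
    intro t ht
    calc ∫⁻ x, ENNReal.ofReal ((|theta π γ' t x| + |Real.log (1 - theta π γ' t x)|) * π t x)
        ≤ ∫⁻ x, (g1 t x + (g2 t x + g3 t x)) := by
          apply lintegral_mono
          intro x
          have := key t ht x
          rw [add_assoc] at this
          exact this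
      _ = (∫⁻ x, g1 t x) + ∫⁻ x, (g2 t x + g3 t x) :=
          lintegral_add_right _ ((hg2meas t).add (hg3meas t))
      _ = (∫⁻ x, g1 t x) + ((∫⁻ x, g2 t x) + (∫⁻ x, g3 t x)) := by
          rw [lintegral_add_right _ (hg3meas t)]
  have step2 : ∫⁻ t in Set.Ioc 0 T, ((∫⁻ x, g1 t x) + ((∫⁻ x, g2 t x) + (∫⁻ x, g3 t x)))
      = (∫⁻ t in Set.Ioc 0 T, ∫⁻ x, g1 t x)
        + ((∫⁻ t in Set.Ioc 0 T, ∫⁻ x, g2 t x) + (∫⁻ t in Set.Ioc 0 T, ∫⁻ x, g3 t x)) := by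
    rw [lintegral_add_right _ (g := fun t => (∫⁻ x, g2 t x) + ∫⁻ x, g3 t x) (hB.add hC), lintegral_add_right _ hC]
  -- finiteness of the three pieces
  have hAfin : (∫⁻ t in Set.Ioc 0 T, ∫⁻ x, g1 t x) < ⊤ := by
    have hsplit : ∀ t, (∫⁻ x, g1 t x)
        ≤ 2 * (∫⁻ x, ENNReal.ofReal (min 1 (x ^ 2) * π t x))
          + ∫⁻ x in Set.Iic (-1 : ℝ),
              ENNReal.ofReal ((Real.log (1 - theta π γ' t x)) ^ 2 * π t x) := by
      intro t
      rw [hg1def]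
      simp only
      rw [lintegral_indicator measurableSet_Iic]
      calc ∫⁻ x in Set.Iic (-1:ℝ),
            ENNReal.ofReal ((2 + (Real.log (1 - theta π γ' t x)) ^ 2) * π t x)
          ≤ ∫⁻ x in Set.Iic (-1:ℝ),
            (ENNReal.ofReal (2 * (min 1 (x ^ 2) * π t x))
              + ENNReal.ofReal ((Real.log (1 - theta π γ' t x)) ^ 2 * π t x)) := by
            apply setLIntegral_mono' measurableSet_Iic
            intro x hx
            have hx1 : x ≤ -1 := hx
            have hmin : min 1 (x ^ 2) = 1 := min_eq_left (by nlinarith)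
            rw [hmin]
            calc ENNReal.ofReal ((2 + (Real.log (1 - theta π γ' t x)) ^ 2) * π t x)
                = ENNReal.ofReal (2 * (1 * π t x)
                    + (Real.log (1 - theta π γ' t x)) ^ 2 * π t x) := by ring_nf
              _ ≤ _ := ENNReal.ofReal_add_le
        _ = (∫⁻ x in Set.Iic (-1:ℝ), ENNReal.ofReal (2 * (min 1 (x ^ 2) * π t x)))
              + ∫⁻ x in Set.Iic (-1:ℝ),
                  ENNReal.ofReal ((Real.log (1 - theta π γ' t x)) ^ 2 * π t x) := by
            apply lintegral_add_left
            exact ((measurable_const.mul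
              ((measurable_const.min (measurable_id.pow measurable_const)).mul
                (hπt t)))).ennreal_ofReal
        _ ≤ 2 * (∫⁻ x, ENNReal.ofReal (min 1 (x ^ 2) * π t x))
              + ∫⁻ x in Set.Iic (-1:ℝ),
                  ENNReal.ofReal ((Real.log (1 - theta π γ' t x)) ^ 2 * π t x) := by
            gcongr
            calc ∫⁻ x in Set.Iic (-1:ℝ), ENNReal.ofReal (2 * (min 1 (x ^ 2) * π t x))
                = ∫⁻ x in Set.Iic (-1:ℝ), 2 * ENNReal.ofReal (min 1 (x ^ 2) * π t x) := by
                  apply lintegral_congr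
                  intro x
                  rw [ENNReal.ofReal_mul (by norm_num)]
                  norm_num
              _ = 2 * ∫⁻ x in Set.Iic (-1:ℝ), ENNReal.ofReal (min 1 (x ^ 2) * π t x) :=
                  lintegral_const_mul' 2 _ (by norm_num)
              _ ≤ 2 * ∫⁻ x, ENNReal.ofReal (min 1 (x ^ 2) * π t x) := by
                  gcongr
                  exact Measure.restrict_le_self
    calc ∫⁻ t in Set.Ioc 0 T, ∫⁻ x, g1 t x
        ≤ ∫⁻ t in Set.Ioc 0 T,
            (2 * (∫⁻ x, ENNReal.ofReal (min 1 (x ^ 2) * π t x))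
              + ∫⁻ x in Set.Iic (-1:ℝ),
                  ENNReal.ofReal ((Real.log (1 - theta π γ' t x)) ^ 2 * π t x)) :=
          lintegral_mono fun t => hsplit t
      _ ≤ (∫⁻ t in Set.Ioc 0 T, 2 * ∫⁻ x, ENNReal.ofReal (min 1 (x ^ 2) * π t x))
            + ∫⁻ t in Set.Ioc 0 T, ∫⁻ x in Set.Iic (-1:ℝ),
                  ENNReal.ofReal ((Real.log (1 - theta π γ' t x)) ^ 2 * π t x) := by
          rw [← lintegral_add_left (f := fun t => 2 * ∫⁻ x, ENNReal.ofReal (min 1 (x ^ 2) * π t x)) (Measurable.const_mul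
            (Measurable.lintegral_prod_right' (f := fun p : ℝ × ℝ => ENNReal.ofReal (min 1 (p.2 ^ 2) * π p.1 p.2))
              (((measurable_const.min ((measurable_snd).pow measurable_const)).mul
                hπmeas').ennreal_ofReal)) 2)]
      _ < ⊤ := by
          apply ENNReal.add_lt_top.mpr
          constructor
          · rw [lintegral_const_mul' 2 _ (by norm_num)]
            exact ENNReal.mul_lt_top (by norm_num) h1
          · exact hA5
  have hBfin : (∫⁻ t in Set.Ioc 0 T, ∫⁻ x, g2 t x) < ⊤ := by
    have heq : ∀ t, (∫⁻ x, g2 t x) = 12 * ∫⁻ x in S2, ENNReal.ofReal (|x| * π t x) := by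
      intro t
      rw [hg2def]
      simp only
      rw [lintegral_indicator hS2m]
      calc ∫⁻ x in S2, ENNReal.ofReal (12 * (|x| * π t x))
          = ∫⁻ x in S2, 12 * ENNReal.ofReal (|x| * π t x) := by
            apply lintegral_congr
            intro x
            rw [ENNReal.ofReal_mul (by norm_num)]
            norm_num
        _ = 12 * ∫⁻ x in S2, ENNReal.ofReal (|x| * π t x) :=
            lintegral_const_mul' 12 _ (by norm_num)
    calc ∫⁻ t in Set.Ioc 0 T, ∫⁻ x, g2 t x
        = ∫⁻ t in Set.Ioc 0 T, 12 * ∫⁻ x in S2, ENNReal.ofReal (|x| * π t x) :=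
          lintegral_congr fun t => heq t
      _ = 12 * ∫⁻ t in Set.Ioc 0 T, ∫⁻ x in S2, ENNReal.ofReal (|x| * π t x) :=
          lintegral_const_mul' 12 _ (by norm_num)
      _ < ⊤ := ENNReal.mul_lt_top (by norm_num) hA6
  have hCfin : (∫⁻ t in Set.Ioc 0 T, ∫⁻ x, g3 t x) < ⊤ := by
    have heq : ∀ t, (∫⁻ x, g3 t x)
        ≤ 2 * ∫⁻ x in {x : ℝ | 1 < |x|}, ENNReal.ofReal (Real.exp (4 * x) * π t x) := by
      intro t
      rw [hg3def]
      simp only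
      rw [lintegral_indicator hS3m]
      calc ∫⁻ x in {x : ℝ | 1 < x}, ENNReal.ofReal (2 * (Real.exp (4 * x) * π t x))
          = ∫⁻ x in {x : ℝ | 1 < x}, 2 * ENNReal.ofReal (Real.exp (4 * x) * π t x) := by
            apply lintegral_congr
            intro x
            rw [ENNReal.ofReal_mul (by norm_num)]
            norm_num
        _ = 2 * ∫⁻ x in {x : ℝ | 1 < x}, ENNReal.ofReal (Real.exp (4 * x) * π t x) :=
            lintegral_const_mul' 2 _ (by norm_num)
        _ ≤ 2 * ∫⁻ x in {x : ℝ | 1 < |x|}, ENNReal.ofReal (Real.exp (4 * x) * π t x) := by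
            gcongr
            exact le_abs_self x
    calc ∫⁻ t in Set.Ioc 0 T, ∫⁻ x, g3 t x
        ≤ ∫⁻ t in Set.Ioc 0 T,
            2 * ∫⁻ x in {x : ℝ | 1 < |x|}, ENNReal.ofReal (Real.exp (4 * x) * π t x) :=
          lintegral_mono fun t => heq t
      _ = 2 * ∫⁻ t in Set.Ioc 0 T,
            ∫⁻ x in {x : ℝ | 1 < |x|}, ENNReal.ofReal (Real.exp (4 * x) * π t x) :=
          lintegral_const_mul' 2 _ (by norm_num)
      _ < ⊤ := ENNReal.mul_lt_top (by norm_num) hA3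
  calc ∫⁻ t in Set.Ioc 0 T, ∫⁻ x,
        ENNReal.ofReal ((|theta π γ' t x| + |Real.log (1 - theta π γ' t x)|) * π t x)
      ≤ _ := step1
    _ = _ := step2
    _ < ⊤ := by
        apply ENNReal.add_lt_top.mpr
        exact ⟨hAfin, ENNReal.add_lt_top.mpr ⟨hBfin, hCfin⟩⟩
end

section
/- Let X be a real-valued random variable on a probability space, let S₀>0, K>0, and R∈(1,2], and assume E[e^{RX}]<∞. Then E[(S₀e^{X}−K)^+]<∞ and, as complex numbers, E[(S₀e^{X}−K)^+] = (1/(2π)) ∫_ℝ K^{1−R−iu} · φ(u−iR) · S₀^{iu+R} / ((iu+R−1)(iu+R)) du, where φ(u−iR) := E[e^{i(u−iR)X}] = E[e^{(iu+R)X}], and for a>0 and w∈ℂ the power a^w denotes exp(w·log a) with the real logarithm. -/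
open MeasureTheory Set Filter Topology Complex
open scoped Real FourierTransform


lemma cm_ne_zero_of_re_pos {z : ℂ} (h : 0 < z.re) : z ≠ 0 := by
  intro hz; rw [hz] at h; simp at h

lemma cm_cpow_eq (K : ℝ) (hK : 0 < K) (w : ℂ) :
    (K : ℂ) ^ w = Complex.exp (w * (Real.log K : ℂ)) := by
  rw [Complex.cpow_def_of_ne_zero (by exact_mod_cast hK.ne'),
    Complex.ofReal_log hK.le, mul_comm]

lemma cm_cexp_integrableOn (z : ℂ) (hz : z.re < 0) (c : ℝ) :
    IntegrableOn (fun x : ℝ => Complex.exp (z * x)) (Ioi c) := by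
  have h0 : 0 < -z.re := by linarith
  refine Integrable.mono' (exp_neg_integrableOn_Ioi c h0) ?_ ?_
  · exact (Complex.continuous_exp.comp (continuous_const.mul Complex.continuous_ofReal)).aestronglyMeasurable
  · filter_upwards with x
    simp [Complex.norm_exp, Complex.mul_re, neg_neg, le_refl]

lemma cm_integral_cexp_Ioi (z : ℂ) (hz : z.re < 0) (c : ℝ) :
    ∫ x in Ioi c, Complex.exp (z * x) = -(Complex.exp (z * c) / z) := by
  have hz0 : z ≠ 0 := fun h => by simp [h] at hz
  have hderiv : ∀ x ∈ Ici c,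
      HasDerivAt (fun x : ℝ => Complex.exp (z * x) / z) (Complex.exp (z * x)) x := by
    intro x _
    have h1 : HasDerivAt (fun x : ℝ => z * (x : ℂ)) z x := by
      simpa using (Complex.ofRealCLM.hasDerivAt (x := x)).const_mul z
    have := h1.cexp.div_const z
    simpa [mul_div_cancel_right₀ _ hz0] using this
  have htend : Tendsto (fun x : ℝ => Complex.exp (z * x) / z) atTop (𝓝 0) := by
    rw [tendsto_zero_iff_norm_tendsto_zero]
    have heq : (fun x : ℝ => ‖Complex.exp (z * x) / z‖)
        = fun x => Real.exp (z.re * x) / ‖z‖ := by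
      ext x
      simp [norm_div, map_div₀, Complex.norm_exp, Complex.mul_re]
    rw [heq]
    have h2 : Tendsto (fun x : ℝ => Real.exp (z.re * x)) atTop (𝓝 0) := by
      apply Real.tendsto_exp_atBot.comp
      exact Tendsto.const_mul_atTop_of_neg hz tendsto_id
    simpa using h2.div_const ‖z‖
  have := integral_Ioi_of_hasDerivAt_of_tendsto'
    hderiv (cm_cexp_integrableOn z hz c) htend
  simpa using this

noncomputable def cmg (K R : ℝ) : ℝ → ℂ :=
  fun x => ((max (Real.exp x - K) 0) * Real.exp (-R * x) : ℝ)

lemma cmg_cont (K R : ℝ) : Continuous (cmg K R) := by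
  apply Complex.continuous_ofReal.comp
  exact ((Real.continuous_exp.sub continuous_const).max continuous_const).mul
    (Real.continuous_exp.comp (continuous_const.mul continuous_id))

lemma cmg_zero {K : ℝ} (R : ℝ) (hK : 0 < K) {x : ℝ} (hx : x ≤ Real.log K) :
    cmg K R x = 0 := by
  have : Real.exp x ≤ K := by
    rw [← Real.exp_log hK]; exact Real.exp_le_exp.2 hx
  simp [cmg, max_eq_right (by linarith : Real.exp x - K ≤ 0)]

lemma cmg_fourier (K R : ℝ) (hK : 0 < K) (hR1 : 1 < R) (ξ : ℝ) :
    𝓕 (cmg K R) ξ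
      = Complex.exp ((1 - R - 2*π*ξ*Complex.I) * (Real.log K : ℂ))
        / ((2*π*ξ*Complex.I + R - 1) * (2*π*ξ*Complex.I + R)) := by
  set L := Real.log K with hL
  set z1 : ℂ := 1 - R - 2*π*ξ*Complex.I with hz1
  set z2 : ℂ := -R - 2*π*ξ*Complex.I with hz2
  have hz1re : z1.re < 0 := by simp [hz1]; linarith
  have hz2re : z2.re < 0 := by simp [hz2]; linarith
  have hz10 : z1 ≠ 0 := fun h => by rw [h] at hz1re; simp at hz1re
  have hz20 : z2 ≠ 0 := fun h => by rw [h] at hz2re; simp at hz2re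
  rw [Real.fourier_real_eq_integral_exp_smul]
  have step1 : (∫ x : ℝ, Complex.exp (↑(-2 * π * x * ξ) * Complex.I) • cmg K R x)
      = ∫ x in Ioi L, Complex.exp (↑(-2 * π * x * ξ) * Complex.I) • cmg K R x := by
    refine (setIntegral_eq_integral_of_forall_compl_eq_zero fun x hx => ?_).symm
    rw [cmg_zero R hK (by simpa using hx), smul_zero]
  rw [step1]
  have step2 : ∀ x ∈ Ioi L,
      Complex.exp (↑(-2 * π * x * ξ) * Complex.I) • cmg K R x
        = Complex.exp (z1 * x) - (K : ℂ) * Complex.exp (z2 * x) := by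
    intro x hx
    have hKx : K ≤ Real.exp x := by
      rw [← Real.exp_log hK]; exact Real.exp_le_exp.2 (le_of_lt hx)
    have h0 : max (Real.exp x - K) 0 = Real.exp x - K := max_eq_left (by linarith)
    have e1 : Complex.exp (z1 * ↑x)
        = Complex.exp (↑(-2 * π * x * ξ) * Complex.I)
          * (Complex.exp ↑x * Complex.exp (-↑R * ↑x)) := by
      rw [← Complex.exp_add, ← Complex.exp_add]; congr 1; rw [hz1]; push_cast; ring
    have e2 : Complex.exp (z2 * ↑x)
        = Complex.exp (↑(-2 * π * x * ξ) * Complex.I) * Complex.exp (-↑R * ↑x) := by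
      rw [← Complex.exp_add]; congr 1; rw [hz2]; push_cast; ring
    simp only [cmg, h0, smul_eq_mul]
    push_cast
    rw [e1, e2]
    push_cast
    ring
  rw [setIntegral_congr_fun measurableSet_Ioi step2]
  rw [integral_sub (cm_cexp_integrableOn z1 hz1re L)
    ((cm_cexp_integrableOn z2 hz2re L).const_mul _)]
  rw [integral_const_mul, cm_integral_cexp_Ioi z1 hz1re L, cm_integral_cexp_Ioi z2 hz2re L]
  have hKL : (K : ℂ) = Complex.exp (L : ℂ) := by
    rw [← Complex.ofReal_exp, hL, Real.exp_log hK]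
  have h12 : (K : ℂ) * Complex.exp (z2 * L) = Complex.exp (z1 * L) := by
    rw [hKL, ← Complex.exp_add]
    congr 1
    rw [hz1, hz2]; ring
  have hd : (2*π*ξ*Complex.I + (R:ℂ) - 1) * (2*π*ξ*Complex.I + R) = z1 * z2 := by
    rw [hz1, hz2]; ring
  rw [mul_neg, sub_neg_eq_add, ← mul_div_assoc, h12, hd]
  have hdiff : z1 - z2 = 1 := by rw [hz1, hz2]; ring
  field_simp
  linear_combination Complex.exp (z1 * (L:ℂ)) * hdiff

lemma cmg_integrable (K R : ℝ) (hK : 0 < K) (hR1 : 1 < R) :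
    Integrable (cmg K R) := by
  set L := Real.log K with hL
  rw [← integrableOn_univ, ← Set.Iic_union_Ioi (a := L), integrableOn_union]
  constructor
  · refine (integrable_zero _ _ _).integrableOn.congr_fun ?_ measurableSet_Iic
    intro x hx
    exact (cmg_zero R hK hx).symm
  · have hdom : IntegrableOn (fun x : ℝ => Real.exp (-(R-1) * x)) (Ioi L) :=
      exp_neg_integrableOn_Ioi L (by linarith)
    refine Integrable.mono' hdom ?_ ?_
    · apply Continuous.aestronglyMeasurable
      apply Complex.continuous_ofReal.comp
      exact ((Real.continuous_exp.sub continuous_const).max continuous_const).mul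
        (Real.continuous_exp.comp (continuous_const.mul continuous_id))
    · refine (ae_restrict_iff' measurableSet_Ioi).2 (Eventually.of_forall fun x hx => ?_)
      have h1 : max (Real.exp x - K) 0 ≤ Real.exp x :=
        max_le (by linarith) (Real.exp_pos x).le
      have h2 : (0:ℝ) ≤ max (Real.exp x - K) 0 := le_max_right _ _
      have : ‖cmg K R x‖ = max (Real.exp x - K) 0 * Real.exp (-R * x) := by
        rw [cmg, Complex.norm_real, Real.norm_eq_abs]
        exact abs_of_nonneg (by positivity)
      rw [this]
      calc max (Real.exp x - K) 0 * Real.exp (-R * x)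
          ≤ Real.exp x * Real.exp (-R * x) :=
            mul_le_mul_of_nonneg_right h1 (Real.exp_pos _).le
        _ = Real.exp (-(R-1) * x) := by rw [← Real.exp_add]; ring_nf

lemma cm_dom_integrable (a : ℝ) (ha : 0 < a) (b : ℝ) (hb : b ≠ 0) :
    Integrable (fun x : ℝ => ((b*x)^2 + a^2)⁻¹) := by
  have h1 : Integrable (fun x : ℝ => (a^2)⁻¹ * (1 + x^2)⁻¹) :=
    integrable_inv_one_add_sq.const_mul _
  have h2 := h1.comp_mul_left' (R := b / a) (div_ne_zero hb ha.ne')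
  refine h2.congr (Eventually.of_forall fun x => ?_)
  have ha' : a ≠ 0 := ha.ne'
  field_simp
  ring

lemma cm_denom_bound (t a b : ℝ) (h0 : 0 < a) (hab : a ≤ b) (d1 d2 : ℂ)
    (h1re : d1.re = a) (h1im : d1.im = t) (h2re : d2.re = b) (h2im : d2.im = t) :
    t^2 + a^2 ≤ ‖d1‖ * ‖d2‖ := by
  have k1 : ‖d1‖ * ‖d1‖ = t^2 + a^2 := by
    rw [Complex.norm_mul_self_eq_normSq, Complex.normSq_apply, h1re, h1im]; ring
  have k2 : ‖d2‖ * ‖d2‖ = t^2 + b^2 := by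
    rw [Complex.norm_mul_self_eq_normSq, Complex.normSq_apply, h2re, h2im]; ring
  have k3 : ‖d1‖ ≤ ‖d2‖ := by nlinarith [norm_nonneg d1, norm_nonneg d2]
  nlinarith [norm_nonneg d1, norm_nonneg d2]

lemma cm_ne1 (R : ℝ) (hR1 : 1 < R) (c : ℝ) :
    ((c:ℂ)*Complex.I + (R:ℂ) - 1) ≠ 0 := by
  intro h
  have := congrArg Complex.re h
  simp at this
  linarith

lemma cm_ne2 (R : ℝ) (hR1 : 1 < R) (c : ℝ) :
    ((c:ℂ)*Complex.I + (R:ℂ)) ≠ 0 := by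
  intro h
  have := congrArg Complex.re h
  simp at this
  linarith

lemma cmg_fourier_integrable (K R : ℝ) (hK : 0 < K) (hR1 : 1 < R) :
    Integrable (𝓕 (cmg K R)) := by
  set L := Real.log K with hL
  set C := Real.exp ((1 - R) * L) with hC
  have hdom : Integrable (fun ξ : ℝ => C * ((2*π*ξ)^2 + (R-1)^2)⁻¹) :=
    (cm_dom_integrable (R-1) (by linarith) (2*π)
      (by positivity)).const_mul C
  refine Integrable.mono' hdom ?_ (Eventually.of_forall fun ξ => ?_)
  · have : (𝓕 (cmg K R)) = fun ξ : ℝ =>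
        Complex.exp ((1 - R - 2*π*ξ*Complex.I) * (L : ℂ))
        / ((2*π*ξ*Complex.I + R - 1) * (2*π*ξ*Complex.I + R)) :=
      funext fun ξ => cmg_fourier K R hK hR1 ξ
    rw [this]
    apply Continuous.aestronglyMeasurable
    apply Continuous.div
    · apply Complex.continuous_exp.comp
      fun_prop
    · fun_prop
    · intro ξ
      apply mul_ne_zero
      · intro h; have := congrArg Complex.re h; simp at this; linarith
      · intro h; have := congrArg Complex.re h; simp at this; linarith
  · rw [cmg_fourier K R hK hR1 ξ]
    have hnum : ‖Complex.exp ((1 - R - 2*π*ξ*Complex.I) * (L : ℂ))‖ = C := by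
      rw [Complex.norm_exp, hC]
      congr 1
      simp [Complex.mul_re]
    have hden : (2*π*ξ)^2 + (R-1)^2
        ≤ ‖(2*(π:ℂ)*ξ*Complex.I + R - 1)‖ * ‖(2*(π:ℂ)*ξ*Complex.I + R)‖ := by
      apply cm_denom_bound (2*π*ξ) (R-1) R (by linarith) (by linarith) <;> simp
    have hR0 : R - 1 ≠ 0 := by linarith
    have hpos : (0:ℝ) < (2*π*ξ)^2 + (R-1)^2 := by positivity
    rw [norm_div, norm_mul, hnum, ← div_eq_mul_inv]
    exact div_le_div_of_nonneg_left (by positivity) hpos hden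

lemma cm_pointwise (K R : ℝ) (hK : 0 < K) (hR1 : 1 < R) (x : ℝ) :
    ((max (Real.exp x - K) 0 : ℝ) : ℂ)
      = ((1 / (2 * π) : ℝ) : ℂ) * ∫ u : ℝ,
          (K : ℂ) ^ ((1 : ℂ) - (R:ℂ) - Complex.I * (u:ℂ))
            * Complex.exp ((Complex.I * (u:ℂ) + (R:ℂ)) * (x:ℂ))
            / ((Complex.I * (u:ℂ) + (R:ℂ) - 1) * (Complex.I * (u:ℂ) + (R:ℂ))) := by
  set L := Real.log K with hL
  set F : ℝ → ℂ := fun u =>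
    (K : ℂ) ^ ((1 : ℂ) - (R:ℂ) - Complex.I * (u:ℂ))
      * Complex.exp ((Complex.I * (u:ℂ) + (R:ℂ)) * (x:ℂ))
      / ((Complex.I * (u:ℂ) + (R:ℂ) - 1) * (Complex.I * (u:ℂ) + (R:ℂ))) with hF
  have hinv := (cmg_cont K R).fourierInv_fourier_eq (cmg_integrable K R hK hR1)
    (cmg_fourier_integrable K R hK hR1)
  have h1 : 𝓕⁻ (𝓕 (cmg K R)) x = cmg K R x := congrFun hinv x
  rw [Real.fourierInv_eq_fourier_neg,
    Real.fourier_real_eq_integral_exp_smul] at h1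
  have h2 : ((max (Real.exp x - K) 0 : ℝ) : ℂ)
      = Complex.exp ((R:ℂ)*(x:ℂ)) * cmg K R x := by
    have e0 : Complex.exp ((R:ℂ)*(x:ℂ)) * Complex.exp (-(R:ℂ)*(x:ℂ)) = 1 := by
      rw [← Complex.exp_add,
        show ((R:ℂ)*(x:ℂ)) + (-(R:ℂ)*(x:ℂ)) = 0 by ring]
      exact Complex.exp_zero
    simp only [cmg]
    push_cast
    linear_combination (-((max (Real.exp x - K) 0 : ℝ) : ℂ)) * e0
  have hpt : ∀ ξ : ℝ, Complex.exp ((R:ℂ)*(x:ℂ))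
      * (Complex.exp (((-2*π*ξ*(-x) : ℝ) : ℂ) * Complex.I) • 𝓕 (cmg K R) ξ)
      = F (2*π*ξ) := by
    intro ξ
    rw [smul_eq_mul, cmg_fourier K R hK hR1 ξ, hF]
    simp only []
    rw [cm_cpow_eq K hK]
    have hD : ((2*(π:ℂ)*ξ*Complex.I + R - 1) * (2*(π:ℂ)*ξ*Complex.I + R))
        = ((Complex.I*((2*π*ξ:ℝ):ℂ) + R - 1) * (Complex.I*((2*π*ξ:ℝ):ℂ) + R)) := by
      push_cast; ring
    have hnum : Complex.exp ((R:ℂ)*(x:ℂ)) * Complex.exp (((-2*π*ξ*(-x) : ℝ):ℂ) * Complex.I)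
          * Complex.exp ((1 - R - 2*π*ξ*Complex.I) * (L : ℂ))
        = Complex.exp (((1:ℂ) - R - Complex.I*((2*π*ξ:ℝ):ℂ)) * (L:ℂ))
          * Complex.exp ((Complex.I*((2*π*ξ:ℝ):ℂ) + R) * (x:ℂ)) := by
      rw [← Complex.exp_add, ← Complex.exp_add, ← Complex.exp_add]
      congr 1
      push_cast
      ring
    calc Complex.exp ((R:ℂ)*(x:ℂ)) * (Complex.exp (((-2*π*ξ*(-x) : ℝ):ℂ) * Complex.I)
          * (Complex.exp ((1 - R - 2*π*ξ*Complex.I) * (L : ℂ))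
            / ((2*(π:ℂ)*ξ*Complex.I + R - 1) * (2*(π:ℂ)*ξ*Complex.I + R))))
        = (Complex.exp ((R:ℂ)*(x:ℂ)) * Complex.exp (((-2*π*ξ*(-x) : ℝ):ℂ) * Complex.I)
            * Complex.exp ((1 - R - 2*π*ξ*Complex.I) * (L : ℂ)))
          / ((2*(π:ℂ)*ξ*Complex.I + R - 1) * (2*(π:ℂ)*ξ*Complex.I + R)) := by ring
      _ = _ := by rw [hnum, hD, mul_div_assoc]
  calc ((max (Real.exp x - K) 0 : ℝ) : ℂ)
      = Complex.exp ((R:ℂ)*(x:ℂ)) * cmg K R x := h2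
    _ = Complex.exp ((R:ℂ)*(x:ℂ))
        * ∫ ξ : ℝ, Complex.exp (((-2*π*ξ*(-x) : ℝ) : ℂ) * Complex.I) • 𝓕 (cmg K R) ξ := by
        rw [← h1]
    _ = ∫ ξ : ℝ, Complex.exp ((R:ℂ)*(x:ℂ))
        * (Complex.exp (((-2*π*ξ*(-x) : ℝ) : ℂ) * Complex.I) • 𝓕 (cmg K R) ξ) := by
        rw [integral_const_mul]
    _ = ∫ ξ : ℝ, F (2*π*ξ) := by
        exact integral_congr_ae (Eventually.of_forall hpt)
    _ = |(2*π)⁻¹| • ∫ u : ℝ, F u := Measure.integral_comp_mul_left F (2*π)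
    _ = ((1 / (2 * π) : ℝ) : ℂ) * ∫ u : ℝ, F u := by
        rw [abs_of_pos (by positivity), Complex.real_smul, one_div]

theorem carr_madan_call_price
    {Ω : Type*} [MeasureSpace Ω] [IsProbabilityMeasure (volume : Measure Ω)]
    (X : Ω → ℝ) (hX : Measurable X) (S₀ K R : ℝ) (hS₀ : 0 < S₀) (hK : 0 < K)
    (hR1 : 1 < R) (hR2 : R ≤ 2)
    (hint : Integrable (fun ω => Real.exp (R * X ω))) :
    Integrable (fun ω => max (S₀ * Real.exp (X ω) - K) 0) ∧
    ((∫ ω, max (S₀ * Real.exp (X ω) - K) 0 : ℝ) : ℂ)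
      = (1 / (2 * Real.pi) : ℝ) * ∫ u : ℝ,
          (K : ℂ) ^ ((1 : ℂ) - (R : ℂ) - Complex.I * (u : ℂ))
            * (∫ ω, Complex.exp ((Complex.I * (u : ℂ) + (R : ℂ)) * (X ω : ℂ)))
            * (S₀ : ℂ) ^ (Complex.I * (u : ℂ) + (R : ℂ))
            / ((Complex.I * (u : ℂ) + (R : ℂ) - 1) * (Complex.I * (u : ℂ) + (R : ℂ))) := by
  -- payoff integrability
  have hpay : Integrable (fun ω => max (S₀ * Real.exp (X ω) - K) 0) := by
    refine Integrable.mono' ((hint.const_mul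
      (Real.exp (R * Real.log S₀ + (1-R) * Real.log K))) ) ?_
      (Eventually.of_forall fun ω => ?_)
    · apply Measurable.aestronglyMeasurable
      exact (measurable_const.mul (Real.measurable_exp.comp hX) |>.sub
        measurable_const).max measurable_const
    · set x := X ω
      rw [Real.norm_eq_abs, _root_.abs_of_nonneg (le_max_right (S₀ * Real.exp x - K) (0:ℝ))]
      rcases le_or_gt (S₀ * Real.exp x) K with h | h
      · rw [max_eq_right (by linarith)]
        positivity
      · rw [max_eq_left (by linarith)]
        have hlog : Real.log K < x + Real.log S₀ := by
          have h2 : K < Real.exp (x + Real.log S₀) := by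
            rw [Real.exp_add, Real.exp_log hS₀]; linarith [mul_comm S₀ (Real.exp x)]
          calc Real.log K < Real.log (Real.exp (x + Real.log S₀)) := Real.log_lt_log hK h2
            _ = x + Real.log S₀ := Real.log_exp _
        calc S₀ * Real.exp x - K ≤ S₀ * Real.exp x := by linarith
          _ = Real.exp (x + Real.log S₀) := by
              rw [Real.exp_add, Real.exp_log hS₀]; ring
          _ ≤ Real.exp (R * Real.log S₀ + (1-R) * Real.log K) * Real.exp (R * x) := by
              rw [← Real.exp_add]
              apply Real.exp_le_exp.2
              nlinarith [hlog, hR1]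
    -- done payoff
  refine ⟨hpay, ?_⟩
  -- notation
  set H : ℝ → Ω → ℂ := fun u ω =>
    (K : ℂ) ^ ((1 : ℂ) - (R : ℂ) - Complex.I * (u : ℂ))
      * Complex.exp ((Complex.I * (u : ℂ) + (R : ℂ)) * (X ω : ℂ))
      * (S₀ : ℂ) ^ (Complex.I * (u : ℂ) + (R : ℂ))
      / ((Complex.I * (u : ℂ) + (R : ℂ) - 1) * (Complex.I * (u : ℂ) + (R : ℂ))) with hH
  -- pointwise identity
  have hpw : ∀ ω, ((max (S₀ * Real.exp (X ω) - K) 0 : ℝ) : ℂ)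
      = ((1 / (2 * π) : ℝ) : ℂ) * ∫ u : ℝ, H u ω := by
    intro ω
    have h0 := cm_pointwise K R hK hR1 (X ω + Real.log S₀)
    have hmax : max (Real.exp (X ω + Real.log S₀) - K) 0
        = max (S₀ * Real.exp (X ω) - K) 0 := by
      rw [Real.exp_add, Real.exp_log hS₀, mul_comm]
    rw [hmax] at h0
    rw [h0]
    congr 1
    apply integral_congr_ae (Eventually.of_forall fun u => ?_)
    rw [hH]
    simp only []
    rw [cm_cpow_eq S₀ hS₀]
    have : Complex.exp ((Complex.I * (u:ℂ) + (R:ℂ)) * ((X ω + Real.log S₀ : ℝ) : ℂ))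
        = Complex.exp ((Complex.I * (u:ℂ) + (R:ℂ)) * (X ω : ℂ))
          * Complex.exp ((Complex.I * (u:ℂ) + (R:ℂ)) * ((Real.log S₀ : ℝ) : ℂ)) := by
      rw [← Complex.exp_add]
      congr 1
      push_cast
      ring
    rw [this]
    ring
  -- measurability of kernel in u alone
  have m2 : Measurable fun u : ℝ =>
      (K : ℂ) ^ ((1 : ℂ) - (R:ℂ) - Complex.I * (u:ℂ)) * (S₀:ℂ) ^ (Complex.I * (u:ℂ) + (R:ℂ))
        / ((Complex.I * (u:ℂ) + (R:ℂ) - 1) * (Complex.I * (u:ℂ) + (R:ℂ))) := by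
    apply Continuous.measurable
    have : (fun u : ℝ =>
        (K : ℂ) ^ ((1 : ℂ) - (R:ℂ) - Complex.I * (u:ℂ)) * (S₀:ℂ) ^ (Complex.I * (u:ℂ) + (R:ℂ))
          / ((Complex.I * (u:ℂ) + (R:ℂ) - 1) * (Complex.I * (u:ℂ) + (R:ℂ))))
        = fun u : ℝ =>
        Complex.exp (((1 : ℂ) - (R:ℂ) - Complex.I * (u:ℂ)) * (Real.log K : ℂ))
          * Complex.exp ((Complex.I * (u:ℂ) + (R:ℂ)) * (Real.log S₀ : ℂ))
          / ((Complex.I * (u:ℂ) + (R:ℂ) - 1) * (Complex.I * (u:ℂ) + (R:ℂ))) := by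
      funext u; rw [cm_cpow_eq K hK, cm_cpow_eq S₀ hS₀]
    rw [this]
    apply Continuous.div
    · fun_prop
    · fun_prop
    · intro u
      apply mul_ne_zero
      · intro h; have := congrArg Complex.re h; simp at this; linarith
      · intro h; have := congrArg Complex.re h; simp at this; linarith
  have hmeas : AEStronglyMeasurable (Function.uncurry fun ω u => H u ω)
      ((volume : Measure Ω).prod volume) := by
    apply Measurable.aestronglyMeasurable
    have m1 : Measurable fun p : Ω × ℝ =>
        Complex.exp ((Complex.I * (p.2:ℂ) + (R:ℂ)) * (X p.1 : ℂ)) := by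
      apply Complex.measurable_exp.comp
      apply Measurable.mul
      · exact ((Complex.measurable_ofReal.comp measurable_snd).const_mul Complex.I).add_const _
      · exact Complex.measurable_ofReal.comp (hX.comp measurable_fst)
    have huncurry : (Function.uncurry fun ω u => H u ω)
        = fun p : Ω × ℝ =>
          ((K : ℂ) ^ ((1 : ℂ) - (R:ℂ) - Complex.I * (p.2:ℂ))
              * (S₀:ℂ) ^ (Complex.I * (p.2:ℂ) + (R:ℂ))
            / ((Complex.I * (p.2:ℂ) + (R:ℂ) - 1) * (Complex.I * (p.2:ℂ) + (R:ℂ))))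
          * Complex.exp ((Complex.I * (p.2:ℂ) + (R:ℂ)) * (X p.1 : ℂ)) := by
      funext p
      simp only [Function.uncurry, hH]
      ring
    rw [huncurry]
    exact (m2.comp measurable_snd).mul m1
  -- integrable dominating product
  have hdom : Integrable (fun u : ℝ => (u^2 + (R-1)^2)⁻¹) := by
    have := cm_dom_integrable (R-1) (by linarith) 1 one_ne_zero
    simpa using this
  have hprod : Integrable (fun p : Ω × ℝ =>
      (Real.exp ((1-R) * Real.log K + R * Real.log S₀) * Real.exp (R * X p.1))
        * ((p.2^2 + (R-1)^2)⁻¹)) ((volume : Measure Ω).prod volume) :=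
    (hint.const_mul _).mul_prod hdom
  have hHint : Integrable (Function.uncurry fun ω u => H u ω)
      ((volume : Measure Ω).prod volume) := by
    refine hprod.mono' hmeas (Eventually.of_forall fun p => ?_)
    simp only [Function.uncurry, hH]
    rw [cm_cpow_eq K hK, cm_cpow_eq S₀ hS₀, norm_div, norm_mul, norm_mul]
    have n1 : ‖Complex.exp (((1:ℂ) - (R:ℂ) - Complex.I*(p.2:ℂ)) * (Real.log K:ℂ))‖
        = Real.exp ((1-R) * Real.log K) := by
      rw [Complex.norm_exp]
      congr 1
      simp [Complex.mul_re]
    have n2 : ‖Complex.exp ((Complex.I*(p.2:ℂ) + (R:ℂ)) * (X p.1:ℂ))‖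
        = Real.exp (R * X p.1) := by
      rw [Complex.norm_exp]
      congr 1
      simp [Complex.mul_re]
    have n3 : ‖Complex.exp ((Complex.I*(p.2:ℂ) + (R:ℂ)) * (Real.log S₀:ℂ))‖
        = Real.exp (R * Real.log S₀) := by
      rw [Complex.norm_exp]
      congr 1
      simp [Complex.mul_re]
    rw [n1, n2, n3, norm_mul]
    have hd : p.2^2 + (R-1)^2
        ≤ ‖(Complex.I*(p.2:ℂ) + (R:ℂ) - 1)‖ * ‖(Complex.I*(p.2:ℂ) + (R:ℂ))‖ := by
      apply cm_denom_bound p.2 (R-1) R (by linarith) (by linarith) <;> simp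
    have hR0 : R - 1 ≠ 0 := by linarith
    have hpos : (0:ℝ) < p.2^2 + (R-1)^2 := by positivity
    calc Real.exp ((1-R) * Real.log K) * Real.exp (R * X p.1) * Real.exp (R * Real.log S₀)
          / (‖(Complex.I*(p.2:ℂ) + (R:ℂ) - 1)‖ * ‖(Complex.I*(p.2:ℂ) + (R:ℂ))‖)
        ≤ Real.exp ((1-R) * Real.log K) * Real.exp (R * X p.1) * Real.exp (R * Real.log S₀)
          / (p.2^2 + (R-1)^2) := div_le_div_of_nonneg_left (by positivity) hpos hd
      _ = Real.exp ((1-R) * Real.log K + R * Real.log S₀) * Real.exp (R * X p.1)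
          * ((p.2^2 + (R-1)^2)⁻¹) := by
          rw [div_eq_mul_inv, Real.exp_add]; ring
  -- main computation
  have hcoe : (((∫ ω, max (S₀ * Real.exp (X ω) - K) 0 : ℝ)) : ℂ)
      = ∫ ω, ((max (S₀ * Real.exp (X ω) - K) 0 : ℝ) : ℂ) := (integral_ofReal).symm
  rw [hcoe]
  calc (∫ ω, ((max (S₀ * Real.exp (X ω) - K) 0 : ℝ) : ℂ))
      = ∫ ω, ((1 / (2 * π) : ℝ) : ℂ) * ∫ u : ℝ, H u ω :=
        integral_congr_ae (Eventually.of_forall hpw)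
    _ = ((1 / (2 * π) : ℝ) : ℂ) * ∫ ω, ∫ u : ℝ, H u ω := integral_const_mul _ _
    _ = ((1 / (2 * π) : ℝ) : ℂ) * ∫ u : ℝ, ∫ ω, H u ω := by
        rw [integral_integral_swap hHint]
    _ = _ := by
        congr 1
        apply integral_congr_ae (Eventually.of_forall fun u => ?_)
        rw [show (fun ω => H u ω) = fun ω =>
            ((K:ℂ)^((1:ℂ)-(R:ℂ)-Complex.I*(u:ℂ)) * (S₀:ℂ)^(Complex.I*(u:ℂ)+(R:ℂ))
              / ((Complex.I*(u:ℂ)+(R:ℂ)-1)*(Complex.I*(u:ℂ)+(R:ℂ))))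
              * Complex.exp ((Complex.I*(u:ℂ)+(R:ℂ))*(X ω:ℂ))
          from funext fun ω => by simp only [hH]; ring]
        rw [integral_const_mul]
        ring
end

section
/- Let C,G,M,H,T>0 and let π(t,x) = C·H·t^{−1−H}·(M e^{−M t^{−H} x}·1_{x>0} + G e^{G t^{−H} x}·1_{x<0}) for t∈(0,T], x∈ℝ. Then ∫₀^T ∫_{0<|x|≤1} |x| π(t,x) dx dt ≤ C·H·∫₀^T t^{−1−H}(t^{2H}/M + t^{2H}/G) dt < ∞. -/
open MeasureTheory Set

/-- The Lévy density of the VGSSD process with parameters `C, G, M` and self-similarity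
exponent `H`:
`π(t,x) = C H t^{-1-H} (M e^{-M t^{-H} x} 1_{x>0} + G e^{G t^{-H} x} 1_{x<0})`. -/
noncomputable def vgssdDensity (C G M H : ℝ) (t x : ℝ) : ℝ :=
  C * H * t ^ (-1 - H) *
    (M * Real.exp (-M * t ^ (-H) * x) * (if 0 < x then 1 else 0)
      + G * Real.exp (G * t ^ (-H) * x) * (if x < 0 then 1 else 0))

lemma lint_Ioi (K b : ℝ) (hb : 0 < b) (hK : 0 ≤ K) :
    ∫⁻ x in Ioi (0:ℝ), ENNReal.ofReal (K * (x * Real.exp (-(b*x)))) =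
      ENNReal.ofReal (K * (1/b^2)) := by
  have hint : IntegrableOn (fun x : ℝ => x * Real.exp (-(b*x))) (Ioi 0) := by
    have := integrableOn_rpow_mul_exp_neg_mul_rpow (p := 1) (s := 1) (b := b)
      (by norm_num) one_pos hb
    simpa [Real.rpow_one, neg_mul] using this
  have hval : ∫ x in Ioi (0:ℝ), x * Real.exp (-(b*x)) = 1/b^2 := by
    have h2 := Real.integral_rpow_mul_exp_neg_mul_Ioi (a := 2) (r := b) two_pos hb
    have e1 : ∀ t : ℝ, t ^ ((2:ℝ)-1) = t := by
      intro t; norm_num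
    simp only [e1] at h2
    rw [h2, Real.Gamma_two, mul_one]
    rw [show (2:ℝ) = ((2:ℕ):ℝ) by norm_num, Real.rpow_natCast, div_pow]
    norm_num
  rw [← ofReal_integral_eq_lintegral_ofReal (hint.const_mul K) ?_]
  · rw [integral_const_mul, hval]
  · filter_upwards [self_mem_ae_restrict (measurableSet_Ioi : MeasurableSet (Ioi (0:ℝ)))]
      with x hx
    have : (0:ℝ) < x := hx
    positivity

lemma lint_Iio (K b : ℝ) (hb : 0 < b) (hK : 0 ≤ K) :
    ∫⁻ x in Iio (0:ℝ), ENNReal.ofReal (K * ((-x) * Real.exp (b*x))) =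
      ENNReal.ofReal (K * (1/b^2)) := by
  have A : MeasurableEmbedding (fun x : ℝ => -x) :=
    (Homeomorph.neg ℝ).isClosedEmbedding.measurableEmbedding
  have hmeas : Measurable fun y : ℝ => ENNReal.ofReal (K * ((-y) * Real.exp (b*y))) := by
    fun_prop
  have hmap := setLIntegral_map (μ := (volume : Measure ℝ))
    (measurableSet_Iio : MeasurableSet (Iio (0:ℝ))) hmeas (measurable_neg : Measurable fun x : ℝ => -x)
  rw [Measure.map_neg_eq_self (volume : Measure ℝ)] at hmap
  have hpre : (fun x : ℝ => -x) ⁻¹' (Iio 0) = Ioi 0 := by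
    ext x; simp
  rw [hmap, hpre]
  rw [← lint_Ioi K b hb hK]
  refine setLIntegral_congr_fun measurableSet_Ioi (fun x hx => ?_)
  simp [mul_comm, neg_mul, mul_neg]

theorem vgssd_A6 (C G M H T : ℝ) (hC : 0 < C) (hG : 0 < G) (hM : 0 < M) (hH : 0 < H)
    (hT : 0 < T) :
    (∫⁻ t in Set.Ioc 0 T, ∫⁻ x in {x : ℝ | 0 < |x| ∧ |x| ≤ 1},
        ENNReal.ofReal (|x| * vgssdDensity C G M H t x)
      ≤ ENNReal.ofReal (C * H) * ∫⁻ t in Set.Ioc 0 T,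
          ENNReal.ofReal (t ^ (-1 - H) * (t ^ (2 * H) / M + t ^ (2 * H) / G))) ∧
    (ENNReal.ofReal (C * H) * ∫⁻ t in Set.Ioc 0 T,
        ENNReal.ofReal (t ^ (-1 - H) * (t ^ (2 * H) / M + t ^ (2 * H) / G)) < ⊤) := by
  constructor
  · have key : ∀ t ∈ Set.Ioc (0:ℝ) T,
        (∫⁻ x in {x : ℝ | 0 < |x| ∧ |x| ≤ 1},
            ENNReal.ofReal (|x| * vgssdDensity C G M H t x))
          ≤ ENNReal.ofReal (C * H) *
              ENNReal.ofReal (t ^ (-1 - H) * (t ^ (2 * H) / M + t ^ (2 * H) / G)) := by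
      intro t ht
      obtain ⟨ht0, htT⟩ := ht
      have ha : (0:ℝ) < t ^ (-H) := Real.rpow_pos_of_pos ht0 _
      have htp : (0:ℝ) < t ^ (-1 - H) := Real.rpow_pos_of_pos ht0 _
      have htP : (0:ℝ) < t ^ (2 * H) := Real.rpow_pos_of_pos ht0 _
      set f := fun x : ℝ => ENNReal.ofReal (|x| * vgssdDensity C G M H t x) with hf
      have hIoi : (∫⁻ x in Ioi (0:ℝ), f x)
          = ENNReal.ofReal ((C * H * t ^ (-1 - H) * M) * (1 / (M * t ^ (-H)) ^ 2)) := by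
        rw [← lint_Ioi (C * H * t ^ (-1 - H) * M) (M * t ^ (-H)) (by positivity) (by positivity)]
        refine setLIntegral_congr_fun measurableSet_Ioi (fun x hx => ?_)
        have hx' : (0:ℝ) < x := hx
        simp only [hf, vgssdDensity, if_pos hx', if_neg (not_lt.mpr hx'.le),
          abs_of_pos hx', mul_one, mul_zero, add_zero]
        congr 1
        rw [show -M * t ^ (-H) * x = -(M * t ^ (-H) * x) by ring]
        ring
      have hIic : (∫⁻ x in (Ioi (0:ℝ))ᶜ, f x)
          = ENNReal.ofReal ((C * H * t ^ (-1 - H) * G) * (1 / (G * t ^ (-H)) ^ 2)) := by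
        rw [compl_Ioi, ← setLIntegral_congr (Iio_ae_eq_Iic (a := (0:ℝ))),
          ← lint_Iio (C * H * t ^ (-1 - H) * G) (G * t ^ (-H)) (by positivity) (by positivity)]
        refine setLIntegral_congr_fun measurableSet_Iio (fun x hx => ?_)
        have hx' : x < (0:ℝ) := hx
        simp only [hf, vgssdDensity, if_pos hx', if_neg (not_lt.mpr hx'.le),
          abs_of_neg hx', mul_one, mul_zero, zero_add]
        congr 1
        ring
      have hsq : (t ^ (-H) : ℝ) ^ 2 = (t ^ (2 * H))⁻¹ := by
        rw [sq, ← Real.rpow_add ht0, show -H + -H = -(2 * H) by ring,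
          Real.rpow_neg ht0.le]
      calc (∫⁻ x in {x : ℝ | 0 < |x| ∧ |x| ≤ 1}, f x)
          ≤ ∫⁻ x, f x := setLIntegral_le_lintegral _ _
        _ = (∫⁻ x in Ioi (0:ℝ), f x) + ∫⁻ x in (Ioi (0:ℝ))ᶜ, f x :=
            (lintegral_add_compl f measurableSet_Ioi).symm
        _ = ENNReal.ofReal ((C * H * t ^ (-1 - H) * M) * (1 / (M * t ^ (-H)) ^ 2))
              + ENNReal.ofReal ((C * H * t ^ (-1 - H) * G) * (1 / (G * t ^ (-H)) ^ 2)) := by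
            rw [hIoi, hIic]
        _ = ENNReal.ofReal (C * H) *
              ENNReal.ofReal (t ^ (-1 - H) * (t ^ (2 * H) / M + t ^ (2 * H) / G)) := by
            rw [← ENNReal.ofReal_mul (by positivity), ← ENNReal.ofReal_add (by positivity)
              (by positivity)]
            congr 1
            rw [mul_pow, mul_pow, hsq]
            field_simp
    calc (∫⁻ t in Set.Ioc (0:ℝ) T, ∫⁻ x in {x : ℝ | 0 < |x| ∧ |x| ≤ 1},
            ENNReal.ofReal (|x| * vgssdDensity C G M H t x))
        ≤ ∫⁻ t in Set.Ioc (0:ℝ) T, ENNReal.ofReal (C * H) *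
            ENNReal.ofReal (t ^ (-1 - H) * (t ^ (2 * H) / M + t ^ (2 * H) / G)) :=
          setLIntegral_mono' measurableSet_Ioc key
      _ = ENNReal.ofReal (C * H) * ∫⁻ t in Set.Ioc (0:ℝ) T,
            ENNReal.ofReal (t ^ (-1 - H) * (t ^ (2 * H) / M + t ^ (2 * H) / G)) :=
          lintegral_const_mul' _ _ ENNReal.ofReal_ne_top
  · refine ENNReal.mul_lt_top ENNReal.ofReal_lt_top ?_
    have hcongr : (∫⁻ t in Set.Ioc (0:ℝ) T,
        ENNReal.ofReal (t ^ (-1 - H) * (t ^ (2 * H) / M + t ^ (2 * H) / G)))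
        = ∫⁻ t in Set.Ioc (0:ℝ) T, ENNReal.ofReal (t ^ (H - 1) * (1 / M + 1 / G)) := by
      refine setLIntegral_congr_fun measurableSet_Ioc (fun t ht => ?_)
      congr 1
      rw [show t ^ (-1 - H) * (t ^ (2 * H) / M + t ^ (2 * H) / G)
          = (t ^ (-1 - H) * t ^ (2 * H)) * (1 / M + 1 / G) by ring,
        ← Real.rpow_add ht.1, show -1 - H + 2 * H = H - 1 by ring]
    rw [hcongr]
    have hint : IntegrableOn (fun t : ℝ => t ^ (H - 1) * (1 / M + 1 / G)) (Ioc 0 T) := by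
      have h1 : IntervalIntegrable (fun t : ℝ => t ^ (H - 1)) volume 0 T :=
        intervalIntegral.intervalIntegrable_rpow' (by linarith)
      exact (intervalIntegrable_iff_integrableOn_Ioc_of_le hT.le).mp (h1.mul_const _)
    exact hint.lintegral_lt_top
end

section
/- Let M>0, 0≤t≤T, and z∈ℂ with |Re(z)| < M T^{−1/2}. For s∈(0,T] and x∈ℝ let π(s,x) := (1/2)·s^{−3/2}·M·e^{−M s^{−1/2}|x|} (x≠0), and let q_s(z) := ∫_ℝ (e^{zx}−1) π(s,x) dx. Then q_s(z) = z²/(M²−z² s) for every s∈(0,T], and ∫_t^T q_s(z) ds = Log((M²−z² t)/(M²−z² T)), where Log denotes the principal branch of the complex logarithm; in particular Re(M²−z² s) > 0 for all s∈[t,T], so the right-hand side is well defined. -/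
open MeasureTheory Set Filter Topology

lemma cexp_integrableOn_Ioi (c : ℂ) (hc : c.re < 0) :
    IntegrableOn (fun x : ℝ => Complex.exp (c * x)) (Ioi 0) := by
  have hg : IntegrableOn (fun x : ℝ => Real.exp (c.re * x)) (Ioi 0) := by
    simpa [neg_neg] using exp_neg_integrableOn_Ioi 0 (show (0:ℝ) < -c.re by linarith)
  refine hg.integrable.mono' ?_ ?_
  · exact (Complex.continuous_exp.comp (by fun_prop)).aestronglyMeasurable
  · filter_upwards with x
    rw [Complex.norm_exp]
    simp [Complex.mul_re]

lemma integral_cexp_Ioi (c : ℂ) (hc : c.re < 0) :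
    ∫ x in Ioi (0:ℝ), Complex.exp (c * x) = -c⁻¹ := by
  have hc0 : c ≠ 0 := fun h => by simp [h] at hc
  have D : ∀ x : ℝ, HasDerivAt (fun y : ℝ => Complex.exp (c * y) / c) (Complex.exp (c * x)) x := by
    intro x
    rw [← mul_div_cancel_right₀ (Complex.exp (c * x)) hc0]
    apply ((Complex.hasDerivAt_exp _).comp x _).div_const c
    simpa only [mul_one, id_eq] using ((hasDerivAt_id (x : ℂ)).const_mul c).comp_ofReal
  have hT : Tendsto (fun x : ℝ => Complex.exp (c * x) / c) atTop (𝓝 0) := by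
    have hb : Tendsto (fun x : ℝ => c.re * x) atTop atBot := by
      have h0 := (tendsto_id (α := ℝ)).const_mul_atTop (show (0:ℝ) < -c.re by linarith)
      simpa [Function.comp_def, neg_mul] using tendsto_neg_atTop_atBot.comp h0
    have h1 : Tendsto (fun x : ℝ => Real.exp (c.re * x)) atTop (𝓝 0) :=
      Real.tendsto_exp_atBot.comp hb
    have h2 : Tendsto (fun x : ℝ => Real.exp (c.re * x) / ‖c‖) atTop (𝓝 0) := by
      simpa using h1.div_const ‖c‖
    refine squeeze_zero_norm (fun x => ?_) h2
    rw [norm_div, Complex.norm_exp]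
    simp [Complex.mul_re]
  have := integral_Ioi_of_hasDerivAt_of_tendsto' (f' := fun x : ℝ => Complex.exp (c * x))
    (fun x _ => D x) (cexp_integrableOn_Ioi c hc) hT
  rw [this]
  simp only [Complex.ofReal_zero, mul_zero, Complex.exp_zero, zero_sub, one_div]

lemma cexp_integrableOn_Iic (c : ℂ) (hc : 0 < c.re) :
    IntegrableOn (fun x : ℝ => Complex.exp (c * x)) (Iic 0) := by
  have h := cexp_integrableOn_Ioi (-c) (by simpa using hc)
  have h2 := (MeasurePreserving.integrableOn_comp_preimage
    (Measure.measurePreserving_neg (volume : Measure ℝ))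
    (Homeomorph.neg ℝ).measurableEmbedding).2 h
  rw [integrableOn_Iic_iff_integrableOn_Iio]
  have : (fun x : ℝ => -x) ⁻¹' Ioi 0 = Iio 0 := by ext x; simp
  rw [this] at h2
  refine h2.congr_fun (fun x _ => ?_) measurableSet_Iio
  simp [Function.comp]

lemma integral_cexp_Iic (c : ℂ) (hc : 0 < c.re) :
    ∫ x in Iic (0:ℝ), Complex.exp (c * x) = c⁻¹ := by
  have h := integral_comp_neg_Iic (0:ℝ) (fun x : ℝ => Complex.exp ((-c) * x))
  simp only [neg_zero] at h
  rw [integral_cexp_Ioi (-c) (by simpa using hc)] at h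
  calc ∫ x in Iic (0:ℝ), Complex.exp (c * x)
      = ∫ x in Iic (0:ℝ), Complex.exp ((-c) * (-x : ℝ)) := by
        refine setIntegral_congr_fun measurableSet_Iic fun x _ => ?_
        push_cast; ring_nf
    _ = -(-c)⁻¹ := h
    _ = c⁻¹ := by rw [inv_neg, neg_neg]

lemma clog_div_of_re_pos {x y : ℂ} (hx : 0 < x.re) (hy : 0 < y.re) :
    Complex.log (x / y) = Complex.log x - Complex.log y := by
  have hx0 : x ≠ 0 := fun h => by simp [h] at hx
  have hy0 : y ≠ 0 := fun h => by simp [h] at hy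
  have hax : |x.arg| < Real.pi / 2 := Complex.abs_arg_lt_pi_div_two_iff.2 (Or.inl hx)
  have hay : |y.arg| < Real.pi / 2 := Complex.abs_arg_lt_pi_div_two_iff.2 (Or.inl hy)
  have him : (Complex.log x - Complex.log y).im = x.arg - y.arg := by
    simp [Complex.sub_im, Complex.log_im]
  have h1 : -Real.pi < (Complex.log x - Complex.log y).im := by
    rw [him]
    cases abs_lt.1 hax with | intro h h' =>
    cases abs_lt.1 hay with | intro g g' =>
    linarith
  have h2 : (Complex.log x - Complex.log y).im ≤ Real.pi := by
    rw [him]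
    cases abs_lt.1 hax with | intro h h' =>
    cases abs_lt.1 hay with | intro g g' =>
    have hpi := Real.pi_pos
    linarith
  have := Complex.log_exp h1 h2
  rw [Complex.exp_sub, Complex.exp_log hx0, Complex.exp_log hy0] at this
  exact this

/-- The VGSSD Lévy density with `C = 1`, `G = M`, `H = 1/2`:
`π(s,x) = (1/2) s^{-3/2} M e^{-M s^{-1/2} |x|}`. -/
noncomputable def symVGSSDdensity (M : ℝ) (s x : ℝ) : ℝ :=
  (1 / 2) * s ^ (-(3 : ℝ) / 2) * M * Real.exp (-M * s ^ (-(1 : ℝ) / 2) * |x|)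

/-- `q_s(z) = ∫ (e^{zx} - 1) π(s,x) dx`. -/
noncomputable def symVGSSDq (M : ℝ) (z : ℂ) (s : ℝ) : ℂ :=
  ∫ x : ℝ, (Complex.exp (z * x) - 1) * (symVGSSDdensity M s x : ℂ)

theorem symVGSSD_q_and_time_integral (M t T : ℝ) (hM : 0 < M) (ht : 0 ≤ t) (htT : t ≤ T)
    (z : ℂ) (hz : |z.re| < M * T ^ (-(1 : ℝ) / 2)) :
    (∀ s ∈ Set.Ioc 0 T, symVGSSDq M z s = z ^ 2 / ((M : ℂ) ^ 2 - z ^ 2 * (s : ℂ))) ∧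
    (∀ s ∈ Set.Icc t T, 0 < ((M : ℂ) ^ 2 - z ^ 2 * (s : ℂ)).re) ∧
    (∫ s in Set.Ioc t T, symVGSSDq M z s)
      = Complex.log (((M : ℂ) ^ 2 - z ^ 2 * (t : ℂ)) / ((M : ℂ) ^ 2 - z ^ 2 * (T : ℂ))) := by

  have hT : 0 < T := by
    rcases (ht.trans htT).lt_or_eq with h | h
    · exact h
    · exfalso
      rw [← h, Real.zero_rpow (by norm_num : (-(1:ℝ)/2) ≠ 0), mul_zero] at hz
      exact absurd hz (not_lt.2 (abs_nonneg _))
  have hrzT : z.re ^ 2 * T < M ^ 2 := by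
    have h1 : |z.re| ^ 2 < (M * T ^ (-(1:ℝ)/2)) ^ 2 := by
      exact pow_lt_pow_left₀ hz (abs_nonneg _) two_ne_zero
    have h2 : (T ^ (-(1:ℝ)/2)) ^ 2 = T⁻¹ := by
      rw [← Real.rpow_natCast (T ^ (-(1:ℝ)/2)) 2, ← Real.rpow_mul hT.le]
      norm_num [Real.rpow_neg_one]
    rw [mul_pow, h2, sq_abs] at h1
    calc z.re ^ 2 * T < M ^ 2 * T⁻¹ * T := mul_lt_mul_of_pos_right h1 hT
      _ = M ^ 2 := by field_simp
  have hre : ∀ s ∈ Icc 0 T, 0 < ((M:ℂ) ^ 2 - z ^ 2 * (s:ℂ)).re := by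
    intro s hs
    have hcomp : ((M:ℂ) ^ 2 - z ^ 2 * (s:ℂ)).re = M ^ 2 - (z.re ^ 2 - z.im ^ 2) * s := by
      simp [Complex.mul_re, Complex.sub_re, pow_two]
    rw [hcomp]
    rcases hs with ⟨hs0, hsT⟩
    nlinarith [sq_nonneg z.re, sq_nonneg z.im,
      mul_le_mul_of_nonneg_left hsT (sq_nonneg z.re)]
  have hne : ∀ s ∈ Icc 0 T, ((M:ℂ) ^ 2 - z ^ 2 * (s:ℂ)) ≠ 0 := by
    intro s hs h
    have h0 := hre s hs
    rw [h] at h0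
    simp at h0
  have part1 : ∀ s ∈ Ioc 0 T, symVGSSDq M z s = z ^ 2 / ((M:ℂ) ^ 2 - z ^ 2 * (s:ℂ)) := by
    intro s hs
    obtain ⟨hs0, hsT⟩ := hs
    set a : ℝ := M * s ^ (-(1:ℝ)/2) with ha_def
    have hs12 : (0:ℝ) < s ^ (-(1:ℝ)/2) := Real.rpow_pos_of_pos hs0 _
    have ha : 0 < a := mul_pos hM hs12
    have hza : |z.re| < a := lt_of_lt_of_le hz (by
      exact mul_le_mul_of_nonneg_left
        (Real.rpow_le_rpow_of_nonpos hs0 hsT (by norm_num)) hM.le)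
    obtain ⟨hza1, hza2⟩ := abs_lt.1 hza
    set K : ℝ := (1/2) * s ^ (-(3:ℝ)/2) * M with hK_def
    have hs1 : s ^ (-(3:ℝ)/2) * s = s ^ (-(1:ℝ)/2) := by
      calc s ^ (-(3:ℝ)/2) * s = s ^ (-(3:ℝ)/2) * s ^ (1:ℝ) := by rw [Real.rpow_one]
        _ = s ^ (-(3:ℝ)/2 + 1) := (Real.rpow_add hs0 _ _).symm
        _ = s ^ (-(1:ℝ)/2) := by norm_num
    have hKa : 2 * K * s = a := by
      calc 2 * K * s = M * (s ^ (-(3:ℝ)/2) * s) := by rw [hK_def]; ring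
        _ = a := by rw [hs1, ha_def]
    have ha2 : a ^ 2 * s = M ^ 2 := by
      have h2 : (s ^ (-(1:ℝ)/2)) ^ 2 = s⁻¹ := by
        rw [← Real.rpow_natCast (s ^ (-(1:ℝ)/2)) 2, ← Real.rpow_mul hs0.le]
        norm_num [Real.rpow_neg_one]
      rw [ha_def, mul_pow, h2]
      field_simp
    set A : ℂ := (a : ℂ) with hA_def
    have hrezA : (z - A).re < 0 := by
      simp only [hA_def, Complex.sub_re, Complex.ofReal_re]; linarith
    have hreAn : ((-A : ℂ)).re < 0 := by
      simp only [hA_def, Complex.neg_re, Complex.ofReal_re]; linarith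
    have hrezpA : 0 < (z + A).re := by
      simp only [hA_def, Complex.add_re, Complex.ofReal_re]; linarith
    have hreA : 0 < (A : ℂ).re := by
      simp only [hA_def, Complex.ofReal_re]; exact ha
    have hdens : ∀ x : ℝ, symVGSSDdensity M s x = K * Real.exp (-(a * |x|)) := by
      intro x
      rw [symVGSSDdensity, hK_def, ha_def]
      ring_nf
    have hIoi_eq : ∀ x ∈ Ioi (0:ℝ),
        (Complex.exp (z * x) - 1) * ((symVGSSDdensity M s x : ℝ) : ℂ)
          = (K : ℂ) * (Complex.exp ((z - A) * x) - Complex.exp ((-A) * x)) := by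
      intro x hx
      rw [hdens x, abs_of_pos hx]
      push_cast
      rw [show ((z - A) * x : ℂ) = z * x + (-(A * x)) by ring, Complex.exp_add,
        show ((-A : ℂ) * x) = -(A * x) by ring]
      rw [hA_def]
      rw [show (-((a:ℂ) * x)) = ((-(a * x) : ℝ) : ℂ) by push_cast; ring,
        ← Complex.ofReal_exp]
      ring
    have hIic_eq : ∀ x ∈ Iic (0:ℝ),
        (Complex.exp (z * x) - 1) * ((symVGSSDdensity M s x : ℝ) : ℂ)
          = (K : ℂ) * (Complex.exp ((z + A) * x) - Complex.exp (A * x)) := by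
      intro x hx
      rw [hdens x, abs_of_nonpos hx]
      push_cast
      rw [show ((z + A) * x : ℂ) = z * x + A * x by ring, Complex.exp_add]
      rw [hA_def]
      rw [show -((a:ℂ) * -(x:ℂ)) = (a:ℂ) * (x:ℂ) by ring]
      ring
    have hIoiInt : IntegrableOn
        (fun x : ℝ => (Complex.exp (z * x) - 1) * ((symVGSSDdensity M s x : ℝ) : ℂ)) (Ioi 0) := by
      have hint : IntegrableOn
          (fun x : ℝ => (K : ℂ) * (Complex.exp ((z - A) * x) - Complex.exp ((-A) * x)))
          (Ioi 0) :=
        ((cexp_integrableOn_Ioi _ hrezA).sub (cexp_integrableOn_Ioi _ hreAn)).const_mul _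
      exact hint.congr_fun (fun x hx => (hIoi_eq x hx).symm) measurableSet_Ioi
    have hIicInt : IntegrableOn
        (fun x : ℝ => (Complex.exp (z * x) - 1) * ((symVGSSDdensity M s x : ℝ) : ℂ)) (Iic 0) := by
      have hint : IntegrableOn
          (fun x : ℝ => (K : ℂ) * (Complex.exp ((z + A) * x) - Complex.exp (A * x)))
          (Iic 0) :=
        ((cexp_integrableOn_Iic _ hrezpA).sub (cexp_integrableOn_Iic _ hreA)).const_mul _
      exact hint.congr_fun (fun x hx => (hIic_eq x hx).symm) measurableSet_Iic
    have hIoi : ∫ x in Ioi (0:ℝ), (Complex.exp (z * x) - 1) * ((symVGSSDdensity M s x : ℝ) : ℂ)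
        = (K : ℂ) * (-(z - A)⁻¹ - -(-A)⁻¹) := by
      rw [setIntegral_congr_fun measurableSet_Ioi hIoi_eq, integral_const_mul,
        integral_sub (cexp_integrableOn_Ioi _ hrezA) (cexp_integrableOn_Ioi _ hreAn),
        integral_cexp_Ioi _ hrezA, integral_cexp_Ioi _ hreAn]
    have hIic : ∫ x in Iic (0:ℝ), (Complex.exp (z * x) - 1) * ((symVGSSDdensity M s x : ℝ) : ℂ)
        = (K : ℂ) * ((z + A)⁻¹ - A⁻¹) := by
      rw [setIntegral_congr_fun measurableSet_Iic hIic_eq, integral_const_mul,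
        integral_sub (cexp_integrableOn_Iic _ hrezpA) (cexp_integrableOn_Iic _ hreA),
        integral_cexp_Iic _ hrezpA, integral_cexp_Iic _ hreA]
    have hsplit : symVGSSDq M z s
        = (K : ℂ) * ((z + A)⁻¹ - A⁻¹) + (K : ℂ) * (-(z - A)⁻¹ - -(-A)⁻¹) := by
      rw [symVGSSDq, ← intervalIntegral.integral_Iic_add_Ioi hIicInt hIoiInt, hIic, hIoi]
    rw [hsplit]
    have hAz1 : A - z ≠ 0 := by
      intro h
      have : (A - z).re = 0 := by rw [h]; simp
      simp only [Complex.sub_re, hA_def, Complex.ofReal_re] at this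
      linarith
    have hAz2 : z + A ≠ 0 := by
      intro h
      have : (z + A).re = 0 := by rw [h]; simp
      linarith
    have hzA' : z - A ≠ 0 := fun h => hAz1 (by rw [← neg_sub] at h; simpa using neg_eq_zero.1 h)
    have hA0 : A ≠ 0 := by
      intro h
      have : (A : ℂ).re = 0 := by rw [h]; simp
      linarith
    have hden := hne s ⟨hs0.le, hsT⟩
    have hKA : 2 * (K : ℂ) * (s : ℂ) = A := by
      rw [hA_def]; exact_mod_cast hKa
    have hA2 : A ^ 2 * (s : ℂ) = (M : ℂ) ^ 2 := by
      rw [hA_def]; exact_mod_cast ha2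
    have hs0' : (s : ℂ) ≠ 0 := by exact_mod_cast hs0.ne'
    rw [eq_div_iff hden]
    field_simp
    linear_combination (z ^ 4 - z ^ 2 * A ^ 2) * hKA + 2 * (K : ℂ) * z ^ 2 * hA2
  refine ⟨part1, fun s hs => hre s ⟨ht.trans hs.1, hs.2⟩, ?_⟩
  rw [setIntegral_congr_fun measurableSet_Ioc
    (fun s hs => part1 s ⟨lt_of_le_of_lt ht hs.1, hs.2⟩)]
  rw [← intervalIntegral.integral_of_le htT]
  have key : ∀ s ∈ uIcc t T, HasDerivAt (fun u : ℝ => -Complex.log ((M:ℂ) ^ 2 - z ^ 2 * u))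
      (z ^ 2 / ((M:ℂ) ^ 2 - z ^ 2 * s)) s := by
    intro s hs
    rw [uIcc_of_le htT] at hs
    have h1 : HasDerivAt (fun u : ℝ => ((u : ℝ) : ℂ)) 1 s := by
      simpa using (hasDerivAt_id s).ofReal_comp
    have hw : HasDerivAt (fun u : ℝ => (M:ℂ) ^ 2 - z ^ 2 * (u:ℂ)) (-(z ^ 2)) s := by
      simpa using (h1.const_mul (z ^ 2)).const_sub ((M:ℂ) ^ 2)
    have hmem : ((M:ℂ) ^ 2 - z ^ 2 * (s:ℂ)) ∈ Complex.slitPlane :=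
      Or.inl (hre s ⟨ht.trans hs.1, hs.2⟩)
    have := (hw.clog_real hmem).neg
    simp only [neg_div, neg_neg] at this; exact this
  rw [intervalIntegral.integral_eq_sub_of_hasDerivAt key ?_]
  · rw [clog_div_of_re_pos (hre t ⟨ht, htT⟩) (hre T ⟨ht.trans htT, le_refl T⟩)]
    · ring
  · apply ContinuousOn.intervalIntegrable
    apply ContinuousOn.div continuousOn_const
    · fun_prop
    · intro s hs
      rw [uIcc_of_le htT] at hs
      exact hne s ⟨ht.trans hs.1, hs.2⟩
end

section
/- Under the stated assumptions, ∫₀^T ∫_ℝ (−2θ_{t,x}+θ_{t,x}²)² π(t,x) dx dt = ∫₀^T ∫_ℝ (4θ_{t,x}² − 4θ_{t,x}³ + θ_{t,x}⁴) π(t,x) dx dt < ∞. -/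
/-!
Under (A4) the ratio `μ^S_t / Σ_t` lies in `(-1, 0]`, so `|θ_{t,x}| ≤ |e^x - 1|`. The integrand is
`(θ² - 2θ)² π ≤ (u² + 2|u|)² π` with `u = e^x - 1`, and `(u² + 2|u|)²` is at most `64 x²` for
`|x| ≤ 1` (as `|u| ≤ 2|x|`) and at most `64 (1 + e^{4x})` everywhere. Hence the integrand is
dominated by `64 ((1 ∧ x²) + 1_{|x|>1} e^{4x}) π`, which is integrable by the two moment assumptions.
-/

open MeasureTheory Set

open ENNReal

lemma abs_mul_div_le_abs {a b u : ℝ} (h : |a| ≤ |b|) : |a * u / b| ≤ |u| := by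
  rcases eq_or_ne b 0 with rfl | hb
  · simp
  rw [abs_div, abs_mul, div_le_iff₀ (abs_pos.2 hb), mul_comm]
  exact mul_le_mul_of_nonneg_left h (abs_nonneg u)

lemma abs_theta_le_abs_exp_sub_one {π : ℝ → ℝ → ℝ} {γ' : ℝ → ℝ} {t : ℝ}
    (hA4 : muS π γ' t ≤ 0 ∧ -Sig π t < muS π γ' t) (x : ℝ) :
    |theta π γ' t x| ≤ |Real.exp x - 1| :=
  abs_mul_div_le_abs <| by
    rw [abs_of_nonpos hA4.1, abs_of_pos (by linarith [hA4.1, hA4.2])]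
    linarith [hA4.2]

lemma quartic_le_of_abs_le {θ u : ℝ} (h : |θ| ≤ |u|) :
    4 * θ ^ 2 - 4 * θ ^ 3 + θ ^ 4 ≤ (u ^ 2 + 2 * |u|) ^ 2 := by
  have hbound : |θ ^ 2 - 2 * θ| ≤ u ^ 2 + 2 * |u| := calc
    |θ ^ 2 - 2 * θ| ≤ |θ| ^ 2 + 2 * |θ| :=
      (abs_sub _ _).trans_eq (by rw [abs_pow, abs_mul, abs_two])
    _ ≤ |u| ^ 2 + 2 * |u| := by gcongr
    _ = u ^ 2 + 2 * |u| := by rw [sq_abs]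
  calc 4 * θ ^ 2 - 4 * θ ^ 3 + θ ^ 4 = |θ ^ 2 - 2 * θ| ^ 2 := by rw [sq_abs]; ring
    _ ≤ (u ^ 2 + 2 * |u|) ^ 2 := by gcongr

lemma sq_add_two_abs_exp_sub_one_le_of_abs_le_one {x : ℝ} (hx : |x| ≤ 1) :
    ((Real.exp x - 1) ^ 2 + 2 * |Real.exp x - 1|) ^ 2 ≤ 64 * x ^ 2 := by
  have hu := Real.abs_exp_sub_one_le hx
  have hsum : (Real.exp x - 1) ^ 2 + 2 * |Real.exp x - 1| ≤ 8 * |x| := by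
    rw [← sq_abs]
    nlinarith [abs_nonneg (Real.exp x - 1)]
  calc _ ≤ (8 * |x|) ^ 2 := by gcongr
    _ = 64 * x ^ 2 := by rw [mul_pow, sq_abs]; norm_num

lemma sq_add_two_abs_exp_sub_one_le (x : ℝ) :
    ((Real.exp x - 1) ^ 2 + 2 * |Real.exp x - 1|) ^ 2 ≤ 64 * (1 + Real.exp (4 * x)) := by
  set y := Real.exp x
  have hy : 0 < y := Real.exp_pos x
  have hu : |y - 1| ≤ y + 1 := abs_le.2 ⟨by linarith, by linarith⟩
  have hsum : (y - 1) ^ 2 + 2 * |y - 1| ≤ y ^ 2 + 4 * y + 3 := by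
    rw [← sq_abs]; nlinarith [abs_nonneg (y - 1)]
  have h4 : Real.exp (4 * x) = y ^ 4 := by exact_mod_cast Real.exp_nat_mul x 4
  rw [h4]
  calc _ ≤ (y ^ 2 + 4 * y + 3) ^ 2 := by gcongr
    _ ≤ 64 * (1 + y ^ 4) := by
      rcases le_total y 1 with h | h
      · nlinarith [mul_le_mul h h hy.le zero_le_one]
      · nlinarith [mul_le_mul h h zero_le_one hy.le]

lemma ofReal_sq_add_two_abs_exp_sub_one_le (x : ℝ) :
    ENNReal.ofReal (((Real.exp x - 1) ^ 2 + 2 * |Real.exp x - 1|) ^ 2) ≤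
      64 * (ENNReal.ofReal (min 1 (x ^ 2)) +
        {y : ℝ | 1 < |y|}.indicator (fun y => ENNReal.ofReal (Real.exp (4 * y))) x) := by
  by_cases hx : 1 < |x|
  · have hmin : min 1 (x ^ 2) = 1 := min_eq_left (by nlinarith [sq_abs x])
    rw [indicator_of_mem (show x ∈ {y : ℝ | 1 < |y|} from hx), hmin, ← ofReal_add zero_le_one
      (Real.exp_pos _).le, ← ofReal_ofNat, ← ofReal_mul (by norm_num)]
    exact ofReal_le_ofReal (sq_add_two_abs_exp_sub_one_le x)
  · have hx' : |x| ≤ 1 := not_lt.1 hx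
    have hmin : min 1 (x ^ 2) = x ^ 2 := min_eq_right (by nlinarith [sq_abs x, abs_nonneg x])
    rw [indicator_of_notMem (show x ∉ {y : ℝ | 1 < |y|} from hx), hmin, add_zero,
      ← ofReal_ofNat, ← ofReal_mul (by norm_num)]
    exact ofReal_le_ofReal (sq_add_two_abs_exp_sub_one_le_of_abs_le_one hx')

lemma ofReal_quartic_mul_le {θ x : ℝ} (q : ℝ → ℝ) (hθ : |θ| ≤ |Real.exp x - 1|) :
    ENNReal.ofReal ((4 * θ ^ 2 - 4 * θ ^ 3 + θ ^ 4) * q x) ≤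
      64 * (ENNReal.ofReal (min 1 (x ^ 2) * q x) +
        {y : ℝ | 1 < |y|}.indicator (fun y => ENNReal.ofReal (Real.exp (4 * y) * q y)) x) := by
  have hweight : ENNReal.ofReal (4 * θ ^ 2 - 4 * θ ^ 3 + θ ^ 4) ≤
      64 * (ENNReal.ofReal (min 1 (x ^ 2)) +
        {y : ℝ | 1 < |y|}.indicator (fun y => ENNReal.ofReal (Real.exp (4 * y))) x) :=
    (ofReal_le_ofReal (quartic_le_of_abs_le hθ)).trans (ofReal_sq_add_two_abs_exp_sub_one_le x)
  have hnonneg : 0 ≤ 4 * θ ^ 2 - 4 * θ ^ 3 + θ ^ 4 := by nlinarith [sq_nonneg (θ ^ 2 - 2 * θ)]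
  calc ENNReal.ofReal ((4 * θ ^ 2 - 4 * θ ^ 3 + θ ^ 4) * q x)
      = ENNReal.ofReal (4 * θ ^ 2 - 4 * θ ^ 3 + θ ^ 4) * ENNReal.ofReal (q x) :=
        ofReal_mul hnonneg
    _ ≤ 64 * (ENNReal.ofReal (min 1 (x ^ 2)) +
        {y : ℝ | 1 < |y|}.indicator (fun y => ENNReal.ofReal (Real.exp (4 * y))) x) *
          ENNReal.ofReal (q x) := by gcongr
    _ = _ := by
      rw [mul_assoc, add_mul, ofReal_mul (le_min zero_le_one (sq_nonneg x))]
      simp_rw [ofReal_mul (Real.exp_pos _).le, indicator_mul_left]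

lemma lintegral_lintegral_lt_top_of_le_mul_add_indicator {α β : Type*} [MeasurableSpace α]
    [MeasurableSpace β] {μ : Measure α} {ν : Measure β} [SFinite ν] {F f g : α → β → ℝ≥0∞}
    {s : Set β} {c : ℝ≥0∞} (hs : MeasurableSet s) (hc : c ≠ ⊤)
    (hf : Measurable (Function.uncurry f))
    (hF : ∀ᵐ a ∂μ, ∀ b, F a b ≤ c * (f a b + s.indicator (g a) b))
    (hfi : ∫⁻ a, ∫⁻ b, f a b ∂ν ∂μ < ⊤) (hgi : ∫⁻ a, ∫⁻ b in s, g a b ∂ν ∂μ < ⊤) :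
    ∫⁻ a, ∫⁻ b, F a b ∂ν ∂μ < ⊤ := calc
  ∫⁻ a, ∫⁻ b, F a b ∂ν ∂μ ≤ ∫⁻ a, c * (∫⁻ b, f a b ∂ν + ∫⁻ b in s, g a b ∂ν) ∂μ := by
    refine lintegral_mono_ae (hF.mono fun a ha => (lintegral_mono ha).trans_eq ?_)
    rw [lintegral_const_mul' _ _ hc,
      lintegral_add_left (f := f a) (hf.comp measurable_prodMk_left), lintegral_indicator hs]
  _ = c * (∫⁻ a, ∫⁻ b, f a b ∂ν ∂μ + ∫⁻ a, ∫⁻ b in s, g a b ∂ν ∂μ) := by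
    rw [lintegral_const_mul' _ _ hc,
      lintegral_add_left (f := fun a => ∫⁻ b, f a b ∂ν) hf.lintegral_prod_right']
  _ < ⊤ := mul_lt_top hc.lt_top (add_lt_top.2 ⟨hfi, hgi⟩)

theorem Z_quadratic_variation_integrable_general
    (T : ℝ) (π : ℝ → ℝ → ℝ)
    (hπmeas : Measurable (Function.uncurry π))
    (h1 : ∫⁻ t in Set.Ioc 0 T, ∫⁻ x, ENNReal.ofReal (min 1 (x ^ 2) * π t x) < ⊤)
    (hA3 : ∫⁻ t in Set.Ioc 0 T, ∫⁻ x in {x : ℝ | 1 < |x|},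
      ENNReal.ofReal (Real.exp (4 * x) * π t x) < ⊤)
    (γ' : ℝ → ℝ)
    (hA4 : ∀ t ∈ Set.Ioc 0 T, muS π γ' t ≤ 0 ∧ -Sig π t < muS π γ' t)
    :
    (∫⁻ t in Set.Ioc 0 T, ∫⁻ x,
        ENNReal.ofReal ((-2 * theta π γ' t x + (theta π γ' t x) ^ 2) ^ 2 * π t x) =
      ∫⁻ t in Set.Ioc 0 T, ∫⁻ x,
        ENNReal.ofReal ((4 * (theta π γ' t x) ^ 2 - 4 * (theta π γ' t x) ^ 3
          + (theta π γ' t x) ^ 4) * π t x)) ∧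
    (∫⁻ t in Set.Ioc 0 T, ∫⁻ x,
        ENNReal.ofReal ((4 * (theta π γ' t x) ^ 2 - 4 * (theta π γ' t x) ^ 3
          + (theta π γ' t x) ^ 4) * π t x) < ⊤) := by
  refine ⟨by simp only [show ∀ θ : ℝ, (-2 * θ + θ ^ 2) ^ 2 = 4 * θ ^ 2 - 4 * θ ^ 3 + θ ^ 4 from
    fun θ => by ring], ?_⟩
  refine lintegral_lintegral_lt_top_of_le_mul_add_indicator
    (c := 64) (measurableSet_lt measurable_const measurable_abs) ofNat_ne_top ?_ ?_ h1 hA3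
  · exact ((measurable_const.min (measurable_snd.pow_const 2)).mul hπmeas).ennreal_ofReal
  · filter_upwards [ae_restrict_mem measurableSet_Ioc] with t ht x
    exact ofReal_quartic_mul_le (π t) (abs_theta_le_abs_exp_sub_one (hA4 t ht) x)

theorem Z_quadratic_variation_integrable
    (T : ℝ) (hT : 0 < T) (π : ℝ → ℝ → ℝ)
    (hπmeas : Measurable (Function.uncurry π)) (hπnn : ∀ t x, 0 ≤ π t x)
    (h1 : ∫⁻ t in Set.Ioc 0 T, ∫⁻ x, ENNReal.ofReal (min 1 (x ^ 2) * π t x) < ⊤)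
    (hA3 : ∫⁻ t in Set.Ioc 0 T, ∫⁻ x in {x : ℝ | 1 < |x|},
      ENNReal.ofReal (Real.exp (4 * x) * π t x) < ⊤)
    (γ' : ℝ → ℝ) (hγ' : IntegrableOn γ' (Set.Ioc 0 T))
    (hμint : ∀ t ∈ Set.Ioc 0 T,
      Integrable (fun x : ℝ => (Real.exp x - 1 - (if |x| ≤ 1 then x else 0)) * π t x))
    (hSigInt : ∀ t ∈ Set.Ioc 0 T, Integrable (fun x : ℝ => (Real.exp x - 1) ^ 2 * π t x))
    (hSigPos : ∀ t ∈ Set.Ioc 0 T, 0 < Sig π t)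
    (hA4 : ∀ t ∈ Set.Ioc 0 T, muS π γ' t ≤ 0 ∧ -Sig π t < muS π γ' t)
    :
    (∫⁻ t in Set.Ioc 0 T, ∫⁻ x,
        ENNReal.ofReal ((-2 * theta π γ' t x + (theta π γ' t x) ^ 2) ^ 2 * π t x) =
      ∫⁻ t in Set.Ioc 0 T, ∫⁻ x,
        ENNReal.ofReal ((4 * (theta π γ' t x) ^ 2 - 4 * (theta π γ' t x) ^ 3
          + (theta π γ' t x) ^ 4) * π t x)) ∧
    (∫⁻ t in Set.Ioc 0 T, ∫⁻ x,
        ENNReal.ofReal ((4 * (theta π γ' t x) ^ 2 - 4 * (theta π γ' t x) ^ 3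
          + (theta π γ' t x) ^ 4) * π t x) < ⊤) :=
  Z_quadratic_variation_integrable_general T π hπmeas h1 hA3 γ' hA4
end

section
/- Let c∈(−1,0], x∈ℝ, and set θ := c(e^{x}−1). Then: (i) if x>0, one has 0 ≤ log(1−θ) ≤ e^{x}−1; (ii) if −1≤x<0, one has 0 ≥ log(1−θ) ≥ (log(1−c(e^{−1}−1))/(e^{−1}−1))·(e^{x}−1); (iii) if x≤−1, one has 0 ≥ log(1−θ) ≥ log(1+c). -/
/-!
Write `u = eˣ - 1 ∈ (-1, ∞)`, so that `log (1 - θ) = log (1 - c u)`. For `u ≥ 0` the bounds come from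
`0 ≤ -c u ≤ u` and `log y ≤ y - 1`; for `u ≤ 0` the argument `1 - c u` lies in `[1 + c, 1]`. The
chord bound in (ii) is concavity of `u ↦ log (1 - c u)`, which vanishes at `u = 0`, on `[e⁻¹ - 1, 0]`.
-/

open Real

namespace Real

theorem mul_log_le_log_one_add_mul_sub_one {a t : ℝ} (ha : 0 < a) (ht₀ : 0 ≤ t) (ht₁ : t ≤ 1) :
    t * log a ≤ log (1 + t * (a - 1)) := by
  have h := strictConcaveOn_log_Ioi.concaveOn.2 (Set.mem_Ioi.2 ha) (Set.mem_Ioi.2 one_pos)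
    ht₀ (sub_nonneg.2 ht₁) (add_sub_cancel t 1)
  simp only [smul_eq_mul, log_one, mul_zero, add_zero, mul_one] at h
  calc t * log a ≤ log (t * a + (1 - t)) := h
    _ = log (1 + t * (a - 1)) := by ring_nf

theorem log_div_mul_le_log_one_sub_mul {c u₀ u : ℝ} (hc : c * u₀ < 1) (hu₀ : u₀ < 0)
    (hu₀u : u₀ ≤ u) (hu : u ≤ 0) :
    log (1 - c * u₀) / u₀ * u ≤ log (1 - c * u) := by
  have ht₀ : 0 ≤ u / u₀ := div_nonneg_of_nonpos hu hu₀.le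
  have ht₁ : u / u₀ ≤ 1 := (div_le_one_of_neg hu₀).2 hu₀u
  have h := mul_log_le_log_one_add_mul_sub_one (sub_pos.2 hc) ht₀ ht₁
  calc log (1 - c * u₀) / u₀ * u = u / u₀ * log (1 - c * u₀) := by ring
    _ ≤ log (1 + u / u₀ * (1 - c * u₀ - 1)) := h
    _ = log (1 - c * u) := by congr 1; field_simp [hu₀.ne]; ring

section

variable {c u : ℝ}

theorem log_one_sub_mul_nonneg (hc : c ≤ 0) (hu : 0 ≤ u) : 0 ≤ log (1 - c * u) :=
  log_nonneg (by nlinarith)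

theorem log_one_sub_mul_le (hc₁ : -1 ≤ c) (hc₂ : c ≤ 0) (hu : 0 ≤ u) : log (1 - c * u) ≤ u :=
  calc log (1 - c * u) ≤ 1 - c * u - 1 := log_le_sub_one_of_pos (by nlinarith)
    _ ≤ u := by nlinarith

theorem log_one_sub_mul_nonpos (hc₁ : -1 ≤ c) (hc₂ : c ≤ 0) (hu₁ : -1 ≤ u) (hu₂ : u ≤ 0) :
    log (1 - c * u) ≤ 0 :=
  log_nonpos (by nlinarith) (by nlinarith)

theorem log_one_add_le_log_one_sub_mul (hc₁ : -1 < c) (hc₂ : c ≤ 0) (hu : -1 ≤ u) :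
    log (1 + c) ≤ log (1 - c * u) :=
  log_le_log (by linarith) (by nlinarith)

end

end Real

theorem log_one_sub_theta_pointwise_bounds (c x : ℝ) (hc1 : -1 < c) (hc2 : c ≤ 0) :
    (0 < x →
      0 ≤ Real.log (1 - c * (Real.exp x - 1)) ∧
      Real.log (1 - c * (Real.exp x - 1)) ≤ Real.exp x - 1) ∧
    (-1 ≤ x → x < 0 →
      Real.log (1 - c * (Real.exp x - 1)) ≤ 0 ∧
      Real.log (1 - c * (Real.exp (-1) - 1)) / (Real.exp (-1) - 1) * (Real.exp x - 1)
        ≤ Real.log (1 - c * (Real.exp x - 1))) ∧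
    (x ≤ -1 →
      Real.log (1 - c * (Real.exp x - 1)) ≤ 0 ∧
      Real.log (1 + c) ≤ Real.log (1 - c * (Real.exp x - 1))) := by
  have hu : ∀ y, -1 ≤ exp y - 1 := fun y => by linarith [exp_pos y]
  have hu_pos : ∀ {y}, 0 < y → 0 < exp y - 1 := fun hy => sub_pos.2 (one_lt_exp_iff.2 hy)
  have hu_neg : ∀ {y}, y < 0 → exp y - 1 < 0 := fun hy => sub_neg.2 (exp_lt_one_iff.2 hy)
  refine ⟨fun hx => ?_, fun hx₁ hx₂ => ?_, fun hx => ?_⟩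
  · exact ⟨log_one_sub_mul_nonneg hc2 (hu_pos hx).le,
      log_one_sub_mul_le hc1.le hc2 (hu_pos hx).le⟩
  · have hu₀ := hu_neg (show (-1 : ℝ) < 0 by norm_num)
    refine ⟨log_one_sub_mul_nonpos hc1.le hc2 (hu x) (hu_neg hx₂).le,
      log_div_mul_le_log_one_sub_mul (by nlinarith [hu (-1)]) hu₀ ?_ (hu_neg hx₂).le⟩
    exact sub_le_sub_right (exp_le_exp.2 hx₁) 1
  · exact ⟨log_one_sub_mul_nonpos hc1.le hc2 (hu x) (hu_neg (by linarith)).le,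
      log_one_add_le_log_one_sub_mul hc1 hc2 (hu x)⟩
end
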